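/- arXiv:2312.06422 — 6 statements merged into one kernel-verified Lean document; each statement's English description precedes it below -/
import Mathlib

section
/- Let X be a compact metric space, H₀ a real Hilbert space, and Φ : X → H₀ a continuous map. Then the kernel mean embedding μ ↦ Π(μ) = ∫_X Φ dμ is continuous as a map from the space of Borel probability measures on X, equipped with the topology of weak convergence of probability measures, to H₀ with its norm topology. -/
open MeasureTheory Metric Set

/-!
The range of `Φ` is compact, so it is covered by finitely many balls `B(vᵢ, ε)`. A partition of
unity `(ρᵢ)` subordinate to their preimages makes `∑ ρᵢ • vᵢ` a convex combination of points
`ε`-close to `Φ`, hence `ε`-close to `Φ` uniformly on `X`. Its mean embedding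
`μ ↦ ∑ (∫ ρᵢ dμ) • vᵢ` is weakly continuous since each `ρᵢ` is bounded and continuous, and it is
`ε`-close to `μ ↦ ∫ Φ dμ` for every probability measure. A uniform limit of continuous maps is
continuous.
-/

theorem PartitionOfUnity.dist_finsum_smul_le {ι X E : Type*} [TopologicalSpace X]
    [SeminormedAddCommGroup E] [NormedSpace ℝ E] {s : Set X} (ρ : PartitionOfUnity ι X s)
    {v : ι → E} {y : E} {ε : ℝ} {x : X} (hx : x ∈ s) (hv : ∀ i, ρ i x ≠ 0 → dist y (v i) ≤ ε) :
    dist y (∑ᶠ i, ρ i x • v i) ≤ ε :=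
  mem_closedBall'.1 <| ρ.finsum_smul_mem_convex (g := fun i _ ↦ v i) hx
    (fun i hi ↦ mem_closedBall'.2 (hv i hi)) (convex_closedBall y ε)

theorem exists_partitionOfUnity_dist_lt {X E : Type*} [TopologicalSpace X] [CompactSpace X]
    [T2Space X] [PseudoMetricSpace E] {Φ : X → E} (hΦ : Continuous Φ) {ε : ℝ} (hε : 0 < ε) :
    ∃ (t : Finset E) (ρ : PartitionOfUnity t X univ), ∀ i x, ρ i x ≠ 0 → dist (Φ x) i < ε := by
  obtain ⟨t, -, ht, hcover⟩ := finite_cover_balls_of_compact (isCompact_range hΦ) hε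
  obtain ⟨ρ, hρ⟩ := PartitionOfUnity.exists_isSubordinate isClosed_univ
    (fun i : ht.toFinset ↦ Φ ⁻¹' ball (i : E) ε) (fun i ↦ isOpen_ball.preimage hΦ) fun x _ ↦ by
      obtain ⟨c, hc, hxc⟩ := mem_iUnion₂.1 (hcover (mem_range_self x))
      exact mem_iUnion.2 ⟨⟨c, ht.mem_toFinset.2 hc⟩, hxc⟩
  exact ⟨ht.toFinset, ρ, fun i x hix ↦ hρ i (subset_tsupport _ hix)⟩

theorem dist_integral_sum_integral_smul_le {ι X E : Type*} [Fintype ι] [TopologicalSpace X]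
    [MeasurableSpace X] [OpensMeasurableSpace X] [NormedAddCommGroup E] [NormedSpace ℝ E]
    [CompleteSpace E] {μ : Measure X} [IsProbabilityMeasure μ] (ρ : PartitionOfUnity ι X univ)
    {Φ : X → E} (hΦ : Integrable Φ μ) {v : ι → E} {ε : ℝ}
    (hv : ∀ i x, ρ i x ≠ 0 → dist (Φ x) (v i) ≤ ε) :
    dist (∫ x, Φ x ∂μ) (∑ i, (∫ x, ρ i x ∂μ) • v i) ≤ ε := by
  have hρ : ∀ i, Integrable (ρ i) μ := fun i ↦
    .of_bound (ρ i).continuous.aestronglyMeasurable 1 <| .of_forall fun x ↦ by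
      rw [Real.norm_of_nonneg (ρ.nonneg i x)]; exact ρ.le_one i x
  have hterm : ∀ i, Integrable (fun x ↦ ρ i x • v i) μ := fun i ↦ (hρ i).smul_const (v i)
  have hpointwise : ∀ x, ‖Φ x - ∑ i, ρ i x • v i‖ ≤ ε := fun x ↦ by
    simpa only [← dist_eq_norm, finsum_eq_sum_of_fintype] using
      ρ.dist_finsum_smul_le (mem_univ x) (hv · x)
  calc dist (∫ x, Φ x ∂μ) (∑ i, (∫ x, ρ i x ∂μ) • v i)
      = ‖∫ x, (Φ x - ∑ i, ρ i x • v i) ∂μ‖ := by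
        simp only [← integral_smul_const, ← integral_finsetSum _ fun i _ ↦ hterm i,
          integral_sub hΦ (integrable_finsetSum _ fun i _ ↦ hterm i), dist_eq_norm]
    _ ≤ ε * μ.real univ := norm_integral_le_of_norm_le_const (.of_forall hpointwise)
    _ = ε := by simp

/-- On a compact metric space `X`, for continuous `Φ : X → H₀`, the kernel mean embedding
`μ ↦ ∫ x, Φ x ∂μ` is continuous from the space of Borel probability measures on `X`
(with the topology of weak convergence) to `H₀` with its norm topology. -/
theorem kme_continuous
    {X : Type*} [MetricSpace X] [CompactSpace X] [MeasurableSpace X] [BorelSpace X]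
    {H₀ : Type*} [NormedAddCommGroup H₀] [InnerProductSpace ℝ H₀] [CompleteSpace H₀]
    (Φ : X → H₀) (hΦ : Continuous Φ) :
    Continuous (fun μ : ProbabilityMeasure X => ∫ x, Φ x ∂(μ : Measure X)) := by
  refine continuous_of_uniform_approx_of_continuous fun u hu ↦ ?_
  obtain ⟨ε, hε, hεu⟩ := mem_uniformity_dist.1 hu
  obtain ⟨t, ρ, hρ⟩ := exists_partitionOfUnity_dist_lt hΦ (half_pos hε)
  refine ⟨fun μ ↦ ∑ i, (∫ x, ρ i x ∂(μ : Measure X)) • (i : H₀), ?_, fun μ ↦ hεu ?_⟩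
  · exact continuous_finsetSum _ fun i _ ↦
      (ProbabilityMeasure.continuous_integral_continuousMap (ρ i)).smul continuous_const
  · exact (dist_integral_sum_integral_smul_le ρ
      (hΦ.integrable_of_hasCompactSupport (.of_compactSpace Φ)) fun i x hix ↦
        (hρ i x hix).le).trans_lt (half_lt_self hε)
end

section
/- Let X be a compact metric space, H₀ a real Hilbert space, and Φ : X → H₀ a map satisfying dist(x, x') = ‖Φ(x) − Φ(x')‖ for all x, x' ∈ X (i.e., the metric of X is the kernel metric induced by Φ). Then the image S = { ∫_X Φ dμ : μ a Borel probability measure on X } of the set of all Borel probability measures under the kernel mean embedding is a compact subset of H₀. -/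
/-!
The Borel probability measures on the compact space `X` form a compact space for weak
convergence (Prokhorov), and the isometry `Φ` is continuous, so it suffices that
`μ ↦ ∫ Φ dμ` is norm-continuous. Its composites with continuous linear functionals are
continuous by the definition of weak convergence, and its values lie in the compact closed
convex hull of `Φ(X)`, on which the weak and the norm topologies agree.
-/

open MeasureTheory Set Filter Topology

theorem isCompact_closure_convexHull {E : Type*} [NormedAddCommGroup E] [NormedSpace ℝ E]
    [CompleteSpace E] {s : Set E} (hs : IsCompact s) :
    IsCompact (closure (convexHull ℝ s)) :=
  (totallyBounded_convexHull.2 hs.totallyBounded).closure.isCompact_of_isClosed isClosed_closure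

theorem integral_mem_closure_convexHull_range {X E : Type*} [MeasurableSpace X]
    [NormedAddCommGroup E] [NormedSpace ℝ E] [CompleteSpace E] {μ : Measure X}
    [IsProbabilityMeasure μ] {Φ : X → E} (hΦ : Integrable Φ μ) :
    ∫ x, Φ x ∂μ ∈ closure (convexHull ℝ (range Φ)) :=
  (convex_convexHull ℝ _).closure.integral_mem isClosed_closure
    (ae_of_all _ fun x => subset_closure (subset_convexHull ℝ _ (mem_range_self x))) hΦ

theorem continuous_of_mem_isCompact_of_forall_continuous_dual {α E : Type*} [TopologicalSpace α]
    [AddCommGroup E] [TopologicalSpace E] [Module ℝ E] [SeparatingDual ℝ E]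
    {K : Set E} {f : α → E} (hK : IsCompact K) (hfK : ∀ a, f a ∈ K)
    (hf : ∀ ℓ : StrongDual ℝ E, Continuous fun a => ℓ (f a)) :
    Continuous f := by
  refine continuous_iff_continuousAt.2 fun a =>
    hK.tendsto_nhds_of_unique_mapClusterPt (Eventually.of_forall hfK) fun y _ hy => ?_
  refine SeparatingDual.eq_iff_forall_dual_eq.2 fun ℓ => eq_of_nhds_neBot (X := ℝ) ?_
  exact (hy.tendsto_comp (ℓ.continuous.tendsto y)).neBot.mono
    (inf_le_inf_left _ ((hf ℓ).tendsto a))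

theorem MeasureTheory.ProbabilityMeasure.continuous_integral_of_continuous {X E : Type*}
    [TopologicalSpace X] [CompactSpace X] [MeasurableSpace X] [OpensMeasurableSpace X]
    [NormedAddCommGroup E] [NormedSpace ℝ E] [CompleteSpace E] {Φ : X → E}
    (hΦ : Continuous Φ) :
    Continuous fun μ : ProbabilityMeasure X => ∫ x, Φ x ∂μ := by
  have hint (μ : ProbabilityMeasure X) : Integrable Φ μ :=
    hΦ.integrable_of_hasCompactSupport (HasCompactSupport.of_compactSpace Φ)
  refine continuous_of_mem_isCompact_of_forall_continuous_dual
    (isCompact_closure_convexHull (isCompact_range hΦ))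
    (fun μ => integral_mem_closure_convexHull_range (hint μ)) fun ℓ => ?_
  simp_rw [← ℓ.integral_comp_comm (hint _)]
  exact continuous_integral_continuousMap (⟨fun x => ℓ (Φ x), by fun_prop⟩ : C(X, ℝ))

/-- If `X` is a compact metric space whose metric is the kernel metric induced by the
feature map `Φ : X → H₀` (i.e. `dist x x' = ‖Φ x - Φ x'‖`), then the image of the set of
all Borel probability measures on `X` under the kernel mean embedding `μ ↦ ∫ x, Φ x ∂μ`
is a compact subset of `H₀`. -/
theorem kme_image_compact
    {X : Type*} [MetricSpace X] [CompactSpace X] [MeasurableSpace X] [BorelSpace X]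
    {H₀ : Type*} [NormedAddCommGroup H₀] [InnerProductSpace ℝ H₀] [CompleteSpace H₀]
    (Φ : X → H₀) (hΦiso : ∀ x x' : X, dist x x' = ‖Φ x - Φ x'‖) :
    IsCompact {h : H₀ | ∃ μ : Measure X, IsProbabilityMeasure μ ∧ h = ∫ x, Φ x ∂μ} := by
  have hΦ : Isometry Φ := Isometry.of_dist_eq fun x x' => by rw [hΦiso, dist_eq_norm]
  have hS : {h : H₀ | ∃ μ : Measure X, IsProbabilityMeasure μ ∧ h = ∫ x, Φ x ∂μ} =
      range fun μ : ProbabilityMeasure X => ∫ x, Φ x ∂μ := by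
    ext h
    exact ⟨fun ⟨μ, hμ, hh⟩ => ⟨⟨μ, hμ⟩, hh.symm⟩, fun ⟨μ, hh⟩ => ⟨μ, μ.prop, hh.symm⟩⟩
  rw [hS]
  exact isCompact_range (ProbabilityMeasure.continuous_integral_of_continuous hΦ.continuous)
end

section
/- Let X be a compact metric space, H₀ a real Hilbert space, and Φ : X → H₀ a continuous map. Then for every Borel probability measure μ on X and every ε > 0 there exist M ∈ ℕ, M ≥ 1, and a tuple x = (x₁,…,x_M) ∈ X^M such that ‖(1/M)∑_{m=1}^M Φ(x_m) − ∫_X Φ dμ‖ ≤ ε; that is, embeddings of empirical measures are dense in the image of the kernel mean embedding. -/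
/-!
The closure of the set of empirical averages `M⁻¹ • ∑ m, Φ (x m)` is convex: the combination
with weight `p / n` of two averages of lengths `M` and `N` is the average over `n * M * N`
points obtained by repeating the two tuples, and such ratios are dense in `[0, 1]`. This closed
convex set contains the range of `Φ`, hence, by Jensen's inequality, the integral `∫ Φ ∂μ`.
-/

open MeasureTheory Filter Topology

section EmpiricalMeans

variable {X E : Type*} [AddCommGroup E] [Module ℝ E]

def empiricalMeans (Φ : X → E) : Set E :=
  {y | ∃ M : ℕ, 1 ≤ M ∧ ∃ x : Fin M → X, y = (M : ℝ)⁻¹ • ∑ m, Φ (x m)}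

variable (Φ : X → E)

theorem apply_mem_empiricalMeans (x : X) : Φ x ∈ empiricalMeans Φ :=
  ⟨1, le_rfl, fun _ => x, by simp⟩

theorem average_mem_empiricalMeans {ι : Type*} [Fintype ι] [Nonempty ι] (x : ι → X) :
    (Fintype.card ι : ℝ)⁻¹ • ∑ i, Φ (x i) ∈ empiricalMeans Φ := by
  let e := Fintype.equivFin ι
  refine ⟨Fintype.card ι, Fintype.card_pos, x ∘ e.symm, ?_⟩
  rw [← e.symm.sum_comp]
  rfl

theorem ratio_combination_mem_empiricalMeans {a b : E} (ha : a ∈ empiricalMeans Φ)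
    (hb : b ∈ empiricalMeans Φ) {p n : ℕ} (hpn : p ≤ n) (hn : 0 < n) :
    ((p : ℝ) / n) • a + (1 - (p : ℝ) / n) • b ∈ empiricalMeans Φ := by
  obtain ⟨M, hM, x, rfl⟩ := ha
  obtain ⟨N, hN, y, rfl⟩ := hb
  obtain ⟨q, rfl⟩ := Nat.exists_eq_add_of_le hpn
  have : Nonempty (Fin (p + q) × Fin M × Fin N) := ⟨(⟨0, hn⟩, ⟨0, hM⟩, ⟨0, hN⟩)⟩
  convert average_mem_empiricalMeans Φ (fun u : Fin (p + q) × Fin M × Fin N =>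
    Fin.addCases (fun _ => x u.2.1) (fun _ => y u.2.2) u.1) using 1
  simp only [Fintype.sum_prod_type, Fin.sum_univ_add, Fin.addCases_left, Fin.addCases_right,
    Finset.sum_const, Finset.card_univ, Fintype.card_fin, Fintype.card_prod, ← Finset.smul_sum,
    ← Nat.cast_smul_eq_nsmul ℝ]
  have hpq : (0 : ℝ) < p + q := by exact_mod_cast hn
  match_scalars <;> field_simp; ring

theorem mem_closure_natRatios {t : ℝ} (ht : t ∈ Set.Icc 0 1) :
    t ∈ closure {s : ℝ | ∃ p n : ℕ, p ≤ n ∧ 0 < n ∧ s = p / n} := by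
  have hlim : Tendsto (fun n : ℕ => (⌊t * n⌋₊ : ℝ) / n) atTop (𝓝 t) :=
    (tendsto_nat_floor_mul_div_atTop ht.1).comp tendsto_natCast_atTop_atTop
  refine mem_closure_of_tendsto hlim ?_
  filter_upwards [eventually_gt_atTop 0] with n hn
  refine ⟨_, n, Nat.floor_le_of_le ?_, hn, rfl⟩
  nlinarith [ht.2, (Nat.cast_nonneg n : (0 : ℝ) ≤ n)]

theorem convex_closure_empiricalMeans [TopologicalSpace E] [IsTopologicalAddGroup E]
    [ContinuousSMul ℝ E] : Convex ℝ (closure (empiricalMeans Φ)) := by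
  intro a ha b hb s t hs _ hst
  obtain rfl : t = 1 - s := by linarith
  let F : ℝ × E × E → E := fun u => u.1 • u.2.1 + (1 - u.1) • u.2.2
  have hF : Continuous F := by fun_prop
  have hmaps : F '' ({s : ℝ | ∃ p n : ℕ, p ≤ n ∧ 0 < n ∧ s = p / n} ×ˢ empiricalMeans Φ ×ˢ
      empiricalMeans Φ) ⊆ empiricalMeans Φ := by
    rintro _ ⟨⟨_, a, b⟩, ⟨⟨p, n, hpn, hn, rfl⟩, ha, hb⟩, rfl⟩
    exact ratio_combination_mem_empiricalMeans Φ ha hb hpn hn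
  refine closure_mono hmaps <|
    image_closure_subset_closure_image hF ⟨(s, a, b), ?_, rfl⟩
  rw [closure_prod_eq, closure_prod_eq]
  exact ⟨mem_closure_natRatios ⟨hs, by linarith⟩, ha, hb⟩

end EmpiricalMeans

/-- On a compact metric space `X`, for continuous `Φ : X → H₀`, embeddings of empirical
measures are dense in the image of the kernel mean embedding: for every Borel probability
measure `μ` on `X` and every `ε > 0` there are `M ≥ 1` and a tuple `x ∈ X^M` with
`‖(1/M) ∑ m, Φ (x m) - ∫ Φ dμ‖ ≤ ε`. -/
theorem empirical_embeddings_dense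
    {X : Type*} [MetricSpace X] [CompactSpace X] [MeasurableSpace X] [BorelSpace X]
    {H₀ : Type*} [NormedAddCommGroup H₀] [InnerProductSpace ℝ H₀] [CompleteSpace H₀]
    (Φ : X → H₀) (hΦ : Continuous Φ) :
    ∀ (μ : Measure X), IsProbabilityMeasure μ → ∀ ε : ℝ, 0 < ε →
      ∃ M : ℕ, 1 ≤ M ∧ ∃ x : Fin M → X,
        ‖(M : ℝ)⁻¹ • (∑ m : Fin M, Φ (x m)) - ∫ y, Φ y ∂μ‖ ≤ ε := by
  intro μ _ ε hε
  have hint : Integrable Φ μ :=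
    integrableOn_univ.1 (hΦ.continuousOn.integrableOn_compact isCompact_univ)
  have hmem : ∫ y, Φ y ∂μ ∈ closure (empiricalMeans Φ) :=
    (convex_closure_empiricalMeans Φ).integral_mem isClosed_closure
      (ae_of_all _ fun x => subset_closure (apply_mem_empiricalMeans Φ x)) hint
  obtain ⟨_, ⟨M, hM, x, rfl⟩, hdist⟩ := Metric.mem_closure_iff.1 hmem ε hε
  exact ⟨M, hM, x, by rw [← dist_eq_norm, dist_comm]; exact hdist.le⟩
end

section
/- Let X be a metric space, H₀ and H real Hilbert spaces, Φ : X → H₀ a bounded Borel-measurable map such that the kernel mean embedding Π is injective (characteristic kernel) and its image S = Π(P(X)) is compact, and let U ⊆ H be compact. For each M ≥ 1 let f_M : X^M × U → X^M satisfy: (1) for every permutation σ of {1,…,M}, every x ∈ X^M and every u ∈ U, the empirical measures satisfy μ̂[f_M(σ·x, u)] = μ̂[f_M(x, u)]; (2) there is L ≥ 0, independent of M, such that ‖Π̂(f_M(x,u)) − Π̂(f_M(x',u'))‖ ≤ L·(‖Π̂(x) − Π̂(x')‖² + ‖u − u'‖²)^{1/2} for all x, x' ∈ X^M and u, u' ∈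 U. Then there exist a strictly increasing sequence of indices (M_ℓ)_ℓ and a map F : S × U → S that is L-Lipschitz with respect to the Hilbert product norm on H₀ × H such that lim_{ℓ→∞} sup_{x ∈ X^{M_ℓ}, u ∈ U} ‖Π̂(f_{M_ℓ}(x,u)) − F(Π̂(x), u)‖ = 0; consequently, defining f(μ,u) := Π⁻¹(F(Π(μ), u)) for probability measures μ on X, one has lim_{ℓ→∞} sup_{x ∈ X^{M_ℓ}, u ∈ U} γ(μ̂[f_{M_ℓ}(x,u)], f(μ̂[x], u)) = 0. -/
open MeasureTheory
open scoped ENNReal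

/-- The empirical measure `μ̂[x] = (1/M) ∑ m, δ_{x m}` of a tuple `x ∈ X^M`. -/
noncomputable def empMeasure {X : Type*} [MeasurableSpace X] {M : ℕ} (x : Fin M → X) :
    Measure X :=
  (M : ℝ≥0∞)⁻¹ • ∑ m : Fin M, Measure.dirac (x m)

/-- The empirical embedding `Π̂(x) = (1/M) ∑ m, Φ (x m)` of a tuple `x ∈ X^M`. -/
noncomputable def empEmbed {X H₀ : Type*} [AddCommMonoid H₀] [Module ℝ H₀]
    (Φ : X → H₀) {M : ℕ} (x : Fin M → X) : H₀ :=
  (M : ℝ)⁻¹ • ∑ m : Fin M, Φ (x m)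

/-- The image `S = Π(P(X))` of the set of all Borel probability measures on `X`
under the kernel mean embedding `Π(μ) = ∫ x, Φ x ∂μ`. -/
def kmeImage {X : Type*} [MeasurableSpace X] {H₀ : Type*} [NormedAddCommGroup H₀]
    [NormedSpace ℝ H₀] (Φ : X → H₀) : Set H₀ :=
  {h : H₀ | ∃ μ : Measure X, IsProbabilityMeasure μ ∧ h = ∫ x, Φ x ∂μ}

set_option linter.unusedSectionVars false
set_option linter.unreachableTactic false
set_option linter.unusedTactic false

section Aux

variable {X : Type*} [MeasurableSpace X]
variable {H₀ : Type*} [NormedAddCommGroup H₀] [NormedSpace ℝ H₀] [CompleteSpace H₀]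

lemma empMeasure_isProb {M : ℕ} (hM : 1 ≤ M) (x : Fin M → X) :
    IsProbabilityMeasure (empMeasure x) := by
  constructor
  simp only [empMeasure, Measure.smul_apply, Measure.finset_sum_apply, smul_eq_mul,
    Measure.dirac_apply_of_mem (Set.mem_univ _), Finset.sum_const, Finset.card_univ,
    Fintype.card_fin, nsmul_eq_mul, mul_one]
  exact ENNReal.inv_mul_cancel (by exact_mod_cast Nat.one_le_iff_ne_zero.mp hM) (by simp)

lemma integrable_of_bdd {μ : Measure X} [IsFiniteMeasure μ] {Φ : X → H₀}
    (hΦmeas : StronglyMeasurable Φ) {C : ℝ} (hC : ∀ x, ‖Φ x‖ ≤ C) :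
    Integrable Φ μ :=
  (integrable_const C).mono' hΦmeas.aestronglyMeasurable (Filter.Eventually.of_forall hC)

lemma integral_empMeasure {Φ : X → H₀} (hΦmeas : StronglyMeasurable Φ)
    {C : ℝ} (hC : ∀ x, ‖Φ x‖ ≤ C) {M : ℕ} (x : Fin M → X) :
    (∫ y, Φ y ∂(empMeasure x)) = empEmbed Φ x := by
  rw [empMeasure, integral_smul_measure,
    integral_finset_sum_measure (fun i _ => integrable_of_bdd hΦmeas hC)]
  simp only [integral_dirac' _ _ hΦmeas, empEmbed]
  congr 1
  simp [ENNReal.toReal_inv]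

end Aux

set_option linter.unusedSectionVars false

section Aux2

variable {X : Type*} [MeasurableSpace X]
variable {H₀ : Type*} [NormedAddCommGroup H₀] [NormedSpace ℝ H₀] [CompleteSpace H₀]
variable {Φ : X → H₀} {C : ℝ}

lemma empEmbed_mem_kmeImage (hΦmeas : StronglyMeasurable Φ) (hC : ∀ x, ‖Φ x‖ ≤ C)
    {M : ℕ} (hM : 1 ≤ M) (x : Fin M → X) : empEmbed Φ x ∈ kmeImage Φ :=
  ⟨empMeasure x, empMeasure_isProb hM x, (integral_empMeasure hΦmeas hC x).symm⟩

/-- repeating a tuple `k` times multiplies the sum of values by `k` -/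
lemma exists_tuple_repeat {M k : ℕ} (x : Fin M → X) :
    ∃ y : Fin (M * k) → X, ∀ g : X → H₀,
      ∑ i, g (y i) = k • ∑ i, g (x i) := by
  refine ⟨fun i => x (finProdFinEquiv.symm i).1, fun g => ?_⟩
  rw [← Equiv.sum_comp (finProdFinEquiv (m := M) (n := k)) (fun i => g (x (finProdFinEquiv.symm i).1))]
  simp [Fintype.sum_prod_type, Finset.sum_const, Finset.smul_sum]

/-- concatenation of tuples -/
lemma exists_tuple_concat {M M' : ℕ} (x : Fin M → X) (y : Fin M' → X) :
    ∃ z : Fin (M + M') → X, ∀ g : X → H₀,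
      ∑ i, g (z i) = ∑ i, g (x i) + ∑ i, g (y i) := by
  refine ⟨Sum.elim x y ∘ finSumFinEquiv.symm, fun g => ?_⟩
  rw [← Equiv.sum_comp (finSumFinEquiv (m := M) (n := M')) (fun i => g ((Sum.elim x y ∘ finSumFinEquiv.symm) i))]
  simp [Fintype.sum_sum_type]

end Aux2

section SqrtLemmas

lemma sqrt_sq_add_sq_le (a b : ℝ) : Real.sqrt (a ^ 2 + b ^ 2) ≤ |a| + |b| := by
  rw [show a ^ 2 + b ^ 2 = |a| ^ 2 + |b| ^ 2 by simp [sq_abs]]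
  nlinarith [Real.sq_sqrt (by positivity : (0:ℝ) ≤ |a| ^ 2 + |b| ^ 2),
    Real.sqrt_nonneg (|a| ^ 2 + |b| ^ 2), abs_nonneg a, abs_nonneg b]

lemma norm_sqrt_lemma {E F : Type*} [NormedAddCommGroup E] [NormedAddCommGroup F]
    (a a' : E) (b b' : F) :
    Real.sqrt (‖a - a'‖ ^ 2 + ‖b - b'‖ ^ 2) ≤ ‖a - a'‖ + ‖b - b'‖ := by
  simpa [abs_of_nonneg (norm_nonneg _)] using sqrt_sq_add_sq_le ‖a - a'‖ ‖b - b'‖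

end SqrtLemmas

section Dyadic

variable {X : Type*} [MeasurableSpace X]
variable {H₀ : Type*} [NormedAddCommGroup H₀] [NormedSpace ℝ H₀] [CompleteSpace H₀]
variable {Φ : X → H₀}

/-- the set of empirical embeddings of tuples of length `2^ℓ`, union over `ℓ` -/
def dyadicEmb (Φ : X → H₀) : Set H₀ :=
  ⋃ ℓ : ℕ, {h : H₀ | ∃ x : Fin (2 ^ ℓ) → X, empEmbed Φ x = h}

lemma exists_tuple_pow {j ℓ : ℕ} (h : j ≤ ℓ) (x : Fin (2 ^ j) → X) :
    ∃ y : Fin (2 ^ ℓ) → X, empEmbed Φ y = empEmbed Φ x := by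
  obtain ⟨y', hy'⟩ := exists_tuple_repeat (k := 2 ^ (ℓ - j)) (H₀ := H₀) x
  have h2 : 2 ^ ℓ = 2 ^ j * 2 ^ (ℓ - j) := by rw [← pow_add, Nat.add_sub_cancel' h]
  refine ⟨y' ∘ finCongr h2, ?_⟩
  have hsum : ∑ i : Fin (2 ^ ℓ), Φ ((y' ∘ finCongr h2) i) = ∑ i, Φ (y' i) :=
    Equiv.sum_comp (finCongr h2) (fun i => Φ (y' i))
  rw [empEmbed, hsum, hy' Φ, empEmbed]
  rw [← Nat.cast_smul_eq_nsmul ℝ, smul_smul]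
  congr 1
  rw [h2]
  push_cast
  rw [mul_inv]
  field_simp

lemma exists_tuple_combo {a b m k : ℕ} (hk : k ≤ 2 ^ m)
    (x : Fin (2 ^ a) → X) (y : Fin (2 ^ b) → X) :
    ∃ z : Fin (2 ^ (a + b + m)) → X,
      empEmbed Φ z = ((k : ℝ) / 2 ^ m) • empEmbed Φ x
        + (1 - (k : ℝ) / 2 ^ m) • empEmbed Φ y := by
  obtain ⟨x1, hx1⟩ := exists_tuple_repeat (k := k * 2 ^ b) (H₀ := H₀) x
  obtain ⟨y1, hy1⟩ := exists_tuple_repeat (k := (2 ^ m - k) * 2 ^ a) (H₀ := H₀) y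
  obtain ⟨z1, hz1⟩ := exists_tuple_concat (H₀ := H₀) x1 y1
  have hlen : 2 ^ a * (k * 2 ^ b) + 2 ^ b * ((2 ^ m - k) * 2 ^ a) = 2 ^ (a + b + m) := by
    have : 2 ^ a * (k * 2 ^ b) + 2 ^ b * ((2 ^ m - k) * 2 ^ a)
        = (k + (2 ^ m - k)) * (2 ^ a * 2 ^ b) := by ring
    rw [this, Nat.add_sub_cancel' hk, ← pow_add, ← pow_add]
    ring_nf
  refine ⟨z1 ∘ finCongr hlen.symm, ?_⟩
  have hsum : ∑ i : Fin (2 ^ (a + b + m)), Φ ((z1 ∘ finCongr hlen.symm) i)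
      = ∑ i, Φ (z1 i) := Equiv.sum_comp (finCongr hlen.symm) (fun i => Φ (z1 i))
  rw [empEmbed, hsum, hz1 Φ, hx1 Φ, hy1 Φ, empEmbed, empEmbed]
  rw [← Nat.cast_smul_eq_nsmul ℝ, ← Nat.cast_smul_eq_nsmul ℝ]
  rw [smul_add, smul_smul, smul_smul, smul_smul, smul_smul]
  congr 1
  · congr 1
    push_cast
    rw [pow_add, pow_add]
    have h2a : (2:ℝ) ^ a ≠ 0 := by positivity
    have h2b : (2:ℝ) ^ b ≠ 0 := by positivity
    have h2m : (2:ℝ) ^ m ≠ 0 := by positivity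
    field_simp
  · congr 1
    push_cast [Nat.cast_sub hk]
    rw [pow_add, pow_add]
    have h2a : (2:ℝ) ^ a ≠ 0 := by positivity
    have h2b : (2:ℝ) ^ b ≠ 0 := by positivity
    have h2m : (2:ℝ) ^ m ≠ 0 := by positivity
    field_simp

end Dyadic

section Density

variable {X : Type*} [MeasurableSpace X]
variable {H₀ : Type*} [NormedAddCommGroup H₀] [NormedSpace ℝ H₀] [CompleteSpace H₀]
variable {Φ : X → H₀}

lemma range_subset_dyadicEmb : Set.range Φ ⊆ dyadicEmb Φ := by
  rintro - ⟨x₀, rfl⟩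
  refine Set.mem_iUnion.mpr ⟨0, ⟨fun _ => x₀, ?_⟩⟩
  simp [empEmbed]

lemma segment_mem_closure_dyadicEmb {p q : H₀} (hp : p ∈ dyadicEmb Φ)
    (hq : q ∈ dyadicEmb Φ) {θ : ℝ} (hθ0 : 0 ≤ θ) (hθ1 : θ ≤ 1) :
    θ • p + (1 - θ) • q ∈ closure (dyadicEmb Φ) := by
  obtain ⟨a, x, rfl⟩ := Set.mem_iUnion.mp hp
  obtain ⟨b, y, rfl⟩ := Set.mem_iUnion.mp hq
  set p := empEmbed Φ x
  set q := empEmbed Φ y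
  -- dyadic approximations of θ
  have key : ∀ n : ℕ, ((⌊θ * 2 ^ n⌋₊ : ℝ) / 2 ^ n) • p
      + (1 - (⌊θ * 2 ^ n⌋₊ : ℝ) / 2 ^ n) • q ∈ dyadicEmb Φ := by
    intro n
    have hk : ⌊θ * 2 ^ n⌋₊ ≤ 2 ^ n := by
      have : θ * 2 ^ n ≤ (2 ^ n : ℝ) := by nlinarith [pow_pos (by norm_num : (0:ℝ) < 2) n]
      calc ⌊θ * 2 ^ n⌋₊ ≤ ⌊(2 ^ n : ℝ)⌋₊ := Nat.floor_le_floor this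
        _ = 2 ^ n := by
          rw [show ((2:ℝ) ^ n) = ((2 ^ n : ℕ) : ℝ) by push_cast; ring, Nat.floor_natCast]
    obtain ⟨z, hz⟩ := exists_tuple_combo (Φ := Φ) hk x y
    rw [show ((2:ℝ) ^ n) = ((2:ℕ) ^ n : ℕ) by push_cast; ring] at *
    exact Set.mem_iUnion.mpr ⟨a + b + n, ⟨z, by rw [hz]⟩⟩
  have hconv : Filter.Tendsto (fun n : ℕ => ((⌊θ * 2 ^ n⌋₊ : ℝ) / 2 ^ n)) Filter.atTop (nhds θ) := by
    have hbound : ∀ n : ℕ, ‖((⌊θ * 2 ^ n⌋₊ : ℝ) / 2 ^ n) - θ‖ ≤ (2 ^ n : ℝ)⁻¹ := by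
      intro n
      have h2 : (0:ℝ) < 2 ^ n := by positivity
      have hfl : (⌊θ * 2 ^ n⌋₊ : ℝ) ≤ θ * 2 ^ n := Nat.floor_le (by positivity)
      have hfu : θ * 2 ^ n ≤ (⌊θ * 2 ^ n⌋₊ : ℝ) + 1 := le_of_lt (Nat.lt_floor_add_one _)
      have hd1 : (⌊θ * 2 ^ n⌋₊ : ℝ) / 2 ^ n ≤ θ := by
        rw [div_le_iff₀ h2]; linarith
      have hd2 : θ ≤ (⌊θ * 2 ^ n⌋₊ : ℝ) / 2 ^ n + (2 ^ n : ℝ)⁻¹ := by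
        have h3 : θ ≤ ((⌊θ * 2 ^ n⌋₊ : ℝ) + 1) / 2 ^ n := by
          rw [le_div_iff₀ h2]; linarith
        rw [add_div] at h3
        simpa [one_div] using h3
      have hinv : (0:ℝ) ≤ (2 ^ n : ℝ)⁻¹ := by positivity
      rw [Real.norm_eq_abs, abs_le]
      constructor <;> linarith
    have h0 : Filter.Tendsto (fun n : ℕ => ((2:ℝ) ^ n)⁻¹) Filter.atTop (nhds 0) := by
      simpa using tendsto_pow_atTop_nhds_zero_of_lt_one (by norm_num : (0:ℝ) ≤ 2⁻¹)
        (by norm_num : (2:ℝ)⁻¹ < 1) |>.congr (fun n => by rw [inv_pow])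
    have := squeeze_zero_norm hbound h0
    have := this.add_const θ
    simpa using this
  have hcont : Filter.Tendsto (fun n : ℕ => ((⌊θ * 2 ^ n⌋₊ : ℝ) / 2 ^ n) • p
      + (1 - (⌊θ * 2 ^ n⌋₊ : ℝ) / 2 ^ n) • q) Filter.atTop (nhds (θ • p + (1 - θ) • q)) := by
    exact ((hconv.smul_const p).add (((tendsto_const_nhds.sub hconv)).smul_const q))
  exact mem_closure_of_tendsto hcont (Filter.Eventually.of_forall key)

lemma convex_closure_dyadicEmb : Convex ℝ (closure (dyadicEmb Φ)) := by
  intro p hp q hq α β hα hβ hab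
  obtain ⟨pn, hpn, hplim⟩ := mem_closure_iff_seq_limit.mp hp
  obtain ⟨qn, hqn, hqlim⟩ := mem_closure_iff_seq_limit.mp hq
  have hmem : ∀ n, α • pn n + β • qn n ∈ closure (dyadicEmb Φ) := by
    intro n
    have := segment_mem_closure_dyadicEmb (hpn n) (hqn n) hα (by linarith)
    rwa [show (1 - α) = β by linarith] at this
  have hlim : Filter.Tendsto (fun n => α • pn n + β • qn n) Filter.atTop
      (nhds (α • p + β • q)) :=
    ((hplim.const_smul α).add (hqlim.const_smul β))
  exact isClosed_closure.mem_of_tendsto hlim (Filter.Eventually.of_forall hmem)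

lemma kmeImage_subset_closure_dyadicEmb (hΦmeas : StronglyMeasurable Φ)
    {C : ℝ} (hC : ∀ x, ‖Φ x‖ ≤ C) :
    kmeImage Φ ⊆ closure (dyadicEmb Φ) := by
  rintro - ⟨μ, hμ, rfl⟩
  exact convex_closure_dyadicEmb.integral_mem isClosed_closure
    (Filter.Eventually.of_forall fun x =>
      subset_closure (range_subset_dyadicEmb ⟨x, rfl⟩))
    (integrable_of_bdd hΦmeas hC)

lemma dyadicEmb_subset_kmeImage (hΦmeas : StronglyMeasurable Φ)
    {C : ℝ} (hC : ∀ x, ‖Φ x‖ ≤ C) : dyadicEmb Φ ⊆ kmeImage Φ := by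
  intro s hs
  obtain ⟨ℓ, x, rfl⟩ := Set.mem_iUnion.mp hs
  exact empEmbed_mem_kmeImage hΦmeas hC (Nat.one_le_two_pow) x

end Density

section Sqrt2

lemma sqrt_perturb (x y d1 d2 : ℝ) (hx : 0 ≤ x) (hy : 0 ≤ y) (h1 : 0 ≤ d1) (h2 : 0 ≤ d2) :
    Real.sqrt ((x + d1) ^ 2 + (y + d2) ^ 2) ≤ Real.sqrt (x ^ 2 + y ^ 2) + d1 + d2 := by
  set s := Real.sqrt (x ^ 2 + y ^ 2) with hs
  have hs0 : 0 ≤ s := Real.sqrt_nonneg _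
  have hssq : s ^ 2 = x ^ 2 + y ^ 2 := Real.sq_sqrt (by positivity)
  have hxs : x ≤ s := by
    rw [hs]
    calc x = Real.sqrt (x ^ 2) := by rw [Real.sqrt_sq hx]
    _ ≤ _ := Real.sqrt_le_sqrt (by nlinarith)
  have hys : y ≤ s := by
    rw [hs]
    calc y = Real.sqrt (y ^ 2) := by rw [Real.sqrt_sq hy]
    _ ≤ _ := Real.sqrt_le_sqrt (by nlinarith)
  have hle : (x + d1) ^ 2 + (y + d2) ^ 2 ≤ (s + d1 + d2) ^ 2 := by nlinarith
  calc Real.sqrt ((x + d1) ^ 2 + (y + d2) ^ 2) ≤ Real.sqrt ((s + d1 + d2) ^ 2) :=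
        Real.sqrt_le_sqrt hle
    _ = s + d1 + d2 := Real.sqrt_sq (by positivity)

lemma sqrt_norm_perturb {E F : Type*} [NormedAddCommGroup E] [NormedAddCommGroup F]
    (v v' : E) (w w' : F) :
    Real.sqrt (‖v‖ ^ 2 + ‖w‖ ^ 2)
      ≤ Real.sqrt (‖v'‖ ^ 2 + ‖w'‖ ^ 2) + ‖v - v'‖ + ‖w - w'‖ := by
  have h1 : ‖v‖ ≤ ‖v'‖ + ‖v - v'‖ := by
    calc ‖v‖ = ‖v' + (v - v')‖ := by rw [add_sub_cancel]
    _ ≤ _ := norm_add_le _ _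
  have h2 : ‖w‖ ≤ ‖w'‖ + ‖w - w'‖ := by
    calc ‖w‖ = ‖w' + (w - w')‖ := by rw [add_sub_cancel]
    _ ≤ _ := norm_add_le _ _
  calc Real.sqrt (‖v‖ ^ 2 + ‖w‖ ^ 2)
      ≤ Real.sqrt ((‖v'‖ + ‖v - v'‖) ^ 2 + (‖w'‖ + ‖w - w'‖) ^ 2) := by
        apply Real.sqrt_le_sqrt
        have := norm_nonneg v; have := norm_nonneg w
        gcongr <;> positivity
    _ ≤ _ := sqrt_perturb _ _ _ _ (norm_nonneg _) (norm_nonneg _) (norm_nonneg _) (norm_nonneg _)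

end Sqrt2

set_option maxHeartbeats 1000000 in
/-- Mean field limit existence for discrete-time control systems: given transition maps
`f_M : X^M × U → X^M` that are permutation invariant on the level of empirical measures
and uniformly Lipschitz in the embedded state and input, there are a subsequence `M_ℓ`
and an `L`-Lipschitz limit map `F : S × U → S` such that
`sup_{x ∈ X^{M_ℓ}, u ∈ U} ‖Π̂(f_{M_ℓ}(x,u)) - F(Π̂(x),u)‖ → 0`; consequently, for the
mean field dynamics `f(μ,u) = Π⁻¹(F(Π(μ),u))` on probability measures one has
`sup_{x, u} γ(μ̂[f_{M_ℓ}(x,u)], f(μ̂[x],u)) → 0`, where `γ(μ,ν) = ‖Π(μ) - Π(ν)‖`. -/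
theorem mfl_with_input
    {X : Type*} [MetricSpace X] [MeasurableSpace X] [BorelSpace X]
    {H₀ : Type*} [NormedAddCommGroup H₀] [InnerProductSpace ℝ H₀] [CompleteSpace H₀]
    {H : Type*} [NormedAddCommGroup H] [InnerProductSpace ℝ H] [CompleteSpace H]
    (Φ : X → H₀) (hΦmeas : StronglyMeasurable Φ) (hΦbdd : ∃ C : ℝ, ∀ x : X, ‖Φ x‖ ≤ C)
    -- the kernel is characteristic: the kernel mean embedding is injective
    (hinj : ∀ μ ν : Measure X, IsProbabilityMeasure μ → IsProbabilityMeasure ν →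
      (∫ y, Φ y ∂μ) = (∫ y, Φ y ∂ν) → μ = ν)
    -- the image of the kernel mean embedding is compact
    (hScpt : IsCompact (kmeImage Φ))
    (U : Set H) (hUcpt : IsCompact U)
    (f : (M : ℕ) → (Fin M → X) → H → (Fin M → X))
    -- (1) permutation invariance of the empirical measure of the image
    (hperm : ∀ M : ℕ, 1 ≤ M → ∀ σ : Equiv.Perm (Fin M), ∀ x : Fin M → X, ∀ u ∈ U,
      empMeasure (f M (x ∘ σ) u) = empMeasure (f M x u))
    (L : ℝ) (hL : 0 ≤ L)
    -- (2) uniform Lipschitz continuity w.r.t. the Hilbert product norm on H₀ × H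
    (hlip : ∀ M : ℕ, 1 ≤ M → ∀ x x' : Fin M → X, ∀ u ∈ U, ∀ u' ∈ U,
      ‖empEmbed Φ (f M x u) - empEmbed Φ (f M x' u')‖ ≤
        L * Real.sqrt (‖empEmbed Φ x - empEmbed Φ x'‖ ^ 2 + ‖u - u'‖ ^ 2)) :
    ∃ Msub : ℕ → ℕ, StrictMono Msub ∧ (∀ ℓ : ℕ, 1 ≤ Msub ℓ) ∧
      ∃ F : H₀ → H → H₀,
        (∀ s ∈ kmeImage Φ, ∀ u ∈ U, F s u ∈ kmeImage Φ) ∧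
        (∀ s ∈ kmeImage Φ, ∀ s' ∈ kmeImage Φ, ∀ u ∈ U, ∀ u' ∈ U,
          ‖F s u - F s' u'‖ ≤ L * Real.sqrt (‖s - s'‖ ^ 2 + ‖u - u'‖ ^ 2)) ∧
        (∀ ε : ℝ, 0 < ε → ∃ N : ℕ, ∀ ℓ : ℕ, N ≤ ℓ → ∀ x : Fin (Msub ℓ) → X, ∀ u ∈ U,
          ‖empEmbed Φ (f (Msub ℓ) x u) - F (empEmbed Φ x) u‖ ≤ ε) ∧
        ∃ fbar : Measure X → H → Measure X,
          (∀ μ : Measure X, IsProbabilityMeasure μ → ∀ u ∈ U,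
            IsProbabilityMeasure (fbar μ u) ∧
              (∫ y, Φ y ∂(fbar μ u)) = F (∫ y, Φ y ∂μ) u) ∧
          (∀ ε : ℝ, 0 < ε → ∃ N : ℕ, ∀ ℓ : ℕ, N ≤ ℓ → ∀ x : Fin (Msub ℓ) → X, ∀ u ∈ U,
            ‖(∫ y, Φ y ∂(empMeasure (f (Msub ℓ) x u))) -
              (∫ y, Φ y ∂(fbar (empMeasure x) u))‖ ≤ ε) := by
  classical
  obtain ⟨C, hC⟩ := hΦbdd
  -- trivial cases
  rcases isEmpty_or_nonempty X with hXe | hXne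
  · have hnoprob : ∀ μ : Measure X, ¬ IsProbabilityMeasure μ := by
      intro μ hμ
      have h1 : μ Set.univ = 1 := hμ.measure_univ
      rw [Set.univ_eq_empty_iff.mpr hXe, measure_empty] at h1
      exact zero_ne_one h1
    have hkme : kmeImage Φ = ∅ := by
      ext s; simp only [kmeImage, Set.mem_setOf_eq, Set.mem_empty_iff_false, iff_false]
      rintro ⟨μ, hμ, -⟩; exact hnoprob μ hμ
    refine ⟨fun ℓ => ℓ + 1, fun a b h => by simpa using h, fun ℓ => by simp,
      fun _ _ => 0, ?_, ?_, ?_, fun μ _ => μ, ?_, ?_⟩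
    · intro s hs; rw [hkme] at hs; exact absurd hs (Set.notMem_empty s)
    · intro s hs; rw [hkme] at hs; exact absurd hs (Set.notMem_empty s)
    · intro ε hε
      exact ⟨0, fun ℓ _ x => isEmptyElim (x 0)⟩
    · intro μ hμ; exact absurd hμ (hnoprob μ)
    · intro ε hε
      exact ⟨0, fun ℓ _ x => isEmptyElim (x 0)⟩
  rcases U.eq_empty_or_nonempty with hUe | hUne
  · subst hUe
    refine ⟨fun ℓ => ℓ + 1, fun a b h => by simpa using h, fun ℓ => by simp,
      fun _ _ => 0, ?_, ?_, ?_, fun μ _ => μ, ?_, ?_⟩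
    · intro s _ u hu; exact absurd hu (Set.notMem_empty u)
    · intro s _ s' _ u hu; exact absurd hu (Set.notMem_empty u)
    · intro ε hε; exact ⟨0, fun ℓ _ x u hu => absurd hu (Set.notMem_empty u)⟩
    · intro μ _ u hu; exact absurd hu (Set.notMem_empty u)
    · intro ε hε; exact ⟨0, fun ℓ _ x u hu => absurd hu (Set.notMem_empty u)⟩
  obtain ⟨x₀⟩ := hXne
  -- main case: X nonempty, U nonempty
  obtain ⟨u₀, hu₀⟩ := hUne
  set S : Set H₀ := kmeImage Φ with hSdef
  set A : Set H₀ := dyadicEmb Φ with hAdef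
  have hAS : A ⊆ S := dyadicEmb_subset_kmeImage hΦmeas hC
  have hSclosed : IsClosed S := hScpt.isClosed
  have hclAS : closure A ⊆ S := closure_minimal hAS hSclosed
  have hSA : S ⊆ closure A := kmeImage_subset_closure_dyadicEmb hΦmeas hC
  set D : Set (H₀ × H) := A ×ˢ U with hDdef
  have hSUclD : S ×ˢ U ⊆ closure D := by
    rw [hDdef, closure_prod_eq]
    exact Set.prod_mono hSA subset_closure
  -- the selector map
  set T : H₀ → H → ℕ → H₀ := fun s u ℓ =>
    if h : ∃ x : Fin (2 ^ ℓ) → X, empEmbed Φ x = s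
    then empEmbed Φ (f (2 ^ ℓ) h.choose u) else Φ x₀ with hTdef
  have hTmem : ∀ s u ℓ, T s u ℓ ∈ S := by
    intro s u ℓ
    rw [hTdef]
    dsimp only
    split
    · exact empEmbed_mem_kmeImage hΦmeas hC Nat.one_le_two_pow _
    · exact hAS (range_subset_dyadicEmb ⟨x₀, rfl⟩)
  have hTpos : ∀ s u ℓ (h : ∃ x : Fin (2 ^ ℓ) → X, empEmbed Φ x = s),
      ∃ x : Fin (2 ^ ℓ) → X, empEmbed Φ x = s ∧ T s u ℓ = empEmbed Φ (f (2 ^ ℓ) x u) := by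
    intro s u ℓ h
    refine ⟨h.choose, h.choose_spec, ?_⟩
    rw [hTdef]
    dsimp only
    rw [dif_pos h]
  -- the ultrafilter
  set 𝒰 : Ultrafilter ℕ := Ultrafilter.of Filter.atTop with h𝒰def
  have h𝒰 : (𝒰 : Filter ℕ) ≤ Filter.atTop := Ultrafilter.of_le _
  have hinf𝒰 : ∀ s : Set ℕ, s ∈ 𝒰 → s.Infinite := by
    intro s hs
    by_contra hfin
    rw [Set.not_infinite] at hfin
    have h1 : sᶜ ∈ Filter.atTop := by
      rw [← Nat.cofinite_eq_atTop]
      exact hfin.compl_mem_cofinite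
    have h2 : s ∩ sᶜ ∈ 𝒰 := Filter.inter_mem hs (h𝒰 h1)
    rw [Set.inter_compl_self] at h2
    haveI : (𝒰 : Filter ℕ).NeBot := 𝒰.neBot
    exact Filter.empty_notMem (𝒰 : Filter ℕ) h2
  -- limit of the selector along the ultrafilter
  have hF0ex : ∀ s : H₀, ∀ u : H, ∃ z : H₀, z ∈ S ∧ Filter.Tendsto (T s u) 𝒰 (nhds z) := by
    intro s u
    have hle : (𝒰 : Filter ℕ).map (T s u) ≤ Filter.principal S :=
      Filter.le_principal_iff.mpr
        (Filter.mem_map.mpr (Filter.univ_mem' (fun ℓ => hTmem s u ℓ)))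
    obtain ⟨z, hzS, hz⟩ := hScpt.ultrafilter_le_nhds (𝒰.map (T s u)) (by exact_mod_cast hle)
    exact ⟨z, hzS, by exact_mod_cast hz⟩
  set F₀ : H₀ → H → H₀ := fun s u => (hF0ex s u).choose with hF0def
  have hF0S : ∀ s u, F₀ s u ∈ S := fun s u => (hF0ex s u).choose_spec.1
  have hF0lim : ∀ s u, Filter.Tendsto (T s u) 𝒰 (nhds (F₀ s u)) :=
    fun s u => (hF0ex s u).choose_spec.2
  -- eventual representability
  have hrep : ∀ s ∈ A, ∀ᶠ ℓ in (𝒰 : Filter ℕ), ∃ x : Fin (2 ^ ℓ) → X, empEmbed Φ x = s := by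
    intro s hs
    obtain ⟨j, x, rfl⟩ := Set.mem_iUnion.mp hs
    apply h𝒰
    filter_upwards [Filter.eventually_ge_atTop j] with ℓ hℓ
    exact exists_tuple_pow hℓ x
  -- Lipschitz property of F₀ on A ×ˢ U
  have hF0lip : ∀ s ∈ A, ∀ s' ∈ A, ∀ u ∈ U, ∀ u' ∈ U,
      ‖F₀ s u - F₀ s' u'‖ ≤ L * Real.sqrt (‖s - s'‖ ^ 2 + ‖u - u'‖ ^ 2) := by
    intro s hs s' hs' u hu u' hu'
    have hev : ∀ᶠ ℓ in (𝒰 : Filter ℕ),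
        ‖T s u ℓ - T s' u' ℓ‖ ≤ L * Real.sqrt (‖s - s'‖ ^ 2 + ‖u - u'‖ ^ 2) := by
      filter_upwards [hrep s hs, hrep s' hs'] with ℓ h1 h2
      obtain ⟨x, hx, hTx⟩ := hTpos s u ℓ h1
      obtain ⟨x', hx', hTx'⟩ := hTpos s' u' ℓ h2
      rw [hTx, hTx', ← hx, ← hx']
      exact hlip (2 ^ ℓ) Nat.one_le_two_pow x x' u hu u' hu'
    haveI : (𝒰 : Filter ℕ).NeBot := 𝒰.neBot
    have htend : Filter.Tendsto (fun ℓ => ‖T s u ℓ - T s' u' ℓ‖) 𝒰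
        (nhds ‖F₀ s u - F₀ s' u'‖) := ((hF0lim s u).sub (hF0lim s' u')).norm
    exact le_of_tendsto htend hev
  -- extension of F₀ to the closure of D
  have key : ∀ p : H₀ × H, p ∈ closure D → ∃ z : H₀, z ∈ S ∧
      ∀ ε : ℝ, 0 < ε → ∃ δ : ℝ, 0 < δ ∧ ∀ q ∈ D, dist p q < δ → ‖F₀ q.1 q.2 - z‖ ≤ ε := by
    intro p hp
    have hex : ∀ n : ℕ, ∃ q, q ∈ D ∧ dist p q < 1 / (n + 1) :=
      fun n => Metric.mem_closure_iff.mp hp _ (by positivity)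
    choose q hqD hqd using hex
    set w : ℕ → H₀ := fun n => F₀ (q n).1 (q n).2 with hwdef
    have hwq : ∀ n m : ℕ, dist (w n) (w m) ≤ (2 * L) * dist (q n) (q m) := by
      intro n m
      rw [dist_eq_norm]
      calc ‖w n - w m‖ ≤ L * Real.sqrt (‖(q n).1 - (q m).1‖ ^ 2 + ‖(q n).2 - (q m).2‖ ^ 2) :=
            hF0lip _ (hqD n).1 _ (hqD m).1 _ (hqD n).2 _ (hqD m).2
        _ ≤ L * (‖(q n).1 - (q m).1‖ + ‖(q n).2 - (q m).2‖) :=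
            mul_le_mul_of_nonneg_left (norm_sqrt_lemma _ _ _ _) hL
        _ ≤ L * (dist (q n) (q m) + dist (q n) (q m)) := by
            apply mul_le_mul_of_nonneg_left _ hL
            have h1 : ‖(q n).1 - (q m).1‖ ≤ dist (q n) (q m) := by
              rw [← dist_eq_norm, Prod.dist_eq]; exact le_max_left _ _
            have h2 : ‖(q n).2 - (q m).2‖ ≤ dist (q n) (q m) := by
              rw [← dist_eq_norm, Prod.dist_eq]; exact le_max_right _ _
            linarith
        _ = (2 * L) * dist (q n) (q m) := by ring
    have hcauchy : CauchySeq w := by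
      refine cauchySeq_of_le_tendsto_0 ((fun N : ℕ => (4 * L) * (1 / ((N : ℝ) + 1)))) ?_ ?_
      · intro n m N hn hm
        have h1 : dist (q n) (q m) ≤ dist (q n) p + dist p (q m) := dist_triangle _ _ _
        have h2 : dist (q n) p < 1 / (n + 1) := by rw [dist_comm]; exact hqd n
        have h3 : dist p (q m) < 1 / (m + 1) := hqd m
        have h4 : (1 : ℝ) / (n + 1) ≤ 1 / (N + 1) := by
          apply one_div_le_one_div_of_le (by positivity)
          exact_mod_cast by omega
        have h5 : (1 : ℝ) / (m + 1) ≤ 1 / (N + 1) := by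
          apply one_div_le_one_div_of_le (by positivity)
          exact_mod_cast by omega
        calc dist (w n) (w m) ≤ (2 * L) * dist (q n) (q m) := hwq n m
          _ ≤ (2 * L) * (1 / (N + 1) + 1 / (N + 1)) := by
              apply mul_le_mul_of_nonneg_left _ (by linarith)
              linarith
          _ = (4 * L) * (1 / (N + 1)) := by ring
      · have := tendsto_one_div_add_atTop_nhds_zero_nat.const_mul (4 * L)
        simpa using this
    obtain ⟨z, hz⟩ := cauchySeq_tendsto_of_complete hcauchy
    have hzS : z ∈ S :=
      hSclosed.mem_of_tendsto hz (Filter.Eventually.of_forall (fun n => hF0S _ _))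
    refine ⟨z, hzS, ?_⟩
    intro ε hε
    have hLpos : (0:ℝ) < L + 1 := by linarith
    refine ⟨ε / (8 * (L + 1)), by positivity, ?_⟩
    intro q' hq' hdq'
    -- choose a large index
    obtain ⟨n₁, hn₁⟩ := exists_nat_one_div_lt (show (0:ℝ) < ε / (8 * (L + 1)) by positivity)
    obtain ⟨n₂, hn₂⟩ := (Metric.tendsto_atTop.mp hz (ε / 2) (by positivity))
    set n := max n₁ n₂ with hndef
    have hna : (1 : ℝ) / (n + 1) ≤ 1 / (n₁ + 1) := by
      apply one_div_le_one_div_of_le (by positivity)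
      exact_mod_cast Nat.add_le_add_right (le_max_left n₁ n₂) 1
    have hq'n : ‖F₀ q'.1 q'.2 - w n‖ ≤ 4 * L * (ε / (8 * (L + 1))) := by
      calc ‖F₀ q'.1 q'.2 - w n‖
          ≤ L * Real.sqrt (‖q'.1 - (q n).1‖ ^ 2 + ‖q'.2 - (q n).2‖ ^ 2) :=
            hF0lip _ hq'.1 _ (hqD n).1 _ hq'.2 _ (hqD n).2
        _ ≤ L * (‖q'.1 - (q n).1‖ + ‖q'.2 - (q n).2‖) :=
            mul_le_mul_of_nonneg_left (norm_sqrt_lemma _ _ _ _) hL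
        _ ≤ L * (dist q' (q n) + dist q' (q n)) := by
            apply mul_le_mul_of_nonneg_left _ hL
            have h1 : ‖q'.1 - (q n).1‖ ≤ dist q' (q n) := by
              rw [← dist_eq_norm, Prod.dist_eq]; exact le_max_left _ _
            have h2 : ‖q'.2 - (q n).2‖ ≤ dist q' (q n) := by
              rw [← dist_eq_norm, Prod.dist_eq]; exact le_max_right _ _
            linarith
        _ ≤ L * (2 * (dist q' p + dist p (q n))) := by
            apply mul_le_mul_of_nonneg_left _ hL
            have h1 := dist_triangle_left q' (q n) p
            have h2 := dist_comm q' p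
            linarith
        _ ≤ 4 * L * (ε / (8 * (L + 1))) := by
            have hd1 : dist q' p < ε / (8 * (L + 1)) := by rw [dist_comm]; exact hdq'
            have hd2 : dist p (q n) < ε / (8 * (L + 1)) := by
              calc dist p (q n) < 1 / (n + 1) := hqd n
                _ ≤ 1 / (n₁ + 1) := hna
                _ ≤ ε / (8 * (L + 1)) := le_of_lt hn₁
            nlinarith [dist_nonneg (x := q') (y := p), dist_nonneg (x := p) (y := q n)]
    have hwz : ‖w n - z‖ ≤ ε / 2 := by
      have := hn₂ n (le_max_right _ _)
      rw [dist_eq_norm] at this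
      linarith
    calc ‖F₀ q'.1 q'.2 - z‖ ≤ ‖F₀ q'.1 q'.2 - w n‖ + ‖w n - z‖ := by
          have := norm_add_le (F₀ q'.1 q'.2 - w n) (w n - z)
          simpa [sub_add_sub_cancel] using this
      _ ≤ 4 * L * (ε / (8 * (L + 1))) + ε / 2 := by linarith
      _ ≤ ε := by
          have heq : 4 * (L + 1) * (ε / (8 * (L + 1))) = ε / 2 := by
            field_simp
            ring
          have hpos : (0:ℝ) ≤ ε / (8 * (L + 1)) := by positivity
          nlinarith
  set F : H₀ → H → H₀ := fun s u =>
    if h : (s, u) ∈ closure D then (key (s, u) h).choose else Φ x₀ with hFdef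
  have hFS : ∀ s u, (s, u) ∈ closure D → F s u ∈ S := by
    intro s u h
    rw [hFdef]; dsimp only; rw [dif_pos h]
    exact (key (s, u) h).choose_spec.1
  have hFapprox : ∀ s u (h : (s, u) ∈ closure D), ∀ ε : ℝ, 0 < ε →
      ∃ δ : ℝ, 0 < δ ∧ ∀ q ∈ D, dist (s, u) q < δ → ‖F₀ q.1 q.2 - F s u‖ ≤ ε := by
    intro s u h
    rw [hFdef]; dsimp only; rw [dif_pos h]
    exact (key (s, u) h).choose_spec.2
  -- F agrees with F₀ on D
  have hFeq : ∀ q ∈ D, F q.1 q.2 = F₀ q.1 q.2 := by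
    intro q hq
    have hqcl : (q.1, q.2) ∈ closure D := subset_closure (by simpa using hq)
    have : ∀ ε : ℝ, 0 < ε → ‖F₀ q.1 q.2 - F q.1 q.2‖ ≤ ε := by
      intro ε hε
      obtain ⟨δ, hδ, hδ'⟩ := hFapprox q.1 q.2 hqcl ε hε
      exact hδ' q hq (by simpa using hδ)
    have h0 : ‖F₀ q.1 q.2 - F q.1 q.2‖ ≤ 0 := by
      by_contra hlt
      push_neg at hlt
      linarith [this (‖F₀ q.1 q.2 - F q.1 q.2‖ / 2) (by linarith)]
    exact (sub_eq_zero.mp (norm_le_zero_iff.mp h0)).symm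
  -- Lipschitz property of F on closure D
  have hFlip : ∀ p ∈ closure D, ∀ p' ∈ closure D,
      ‖F p.1 p.2 - F p'.1 p'.2‖ ≤ L * Real.sqrt (‖p.1 - p'.1‖ ^ 2 + ‖p.2 - p'.2‖ ^ 2) := by
    intro p hp p' hp'
    apply le_of_forall_pos_le_add
    intro ε hε
    set ε' : ℝ := ε / (4 * L + 3) with hε'def
    have hε' : 0 < ε' := by positivity
    obtain ⟨δ₁, hδ₁, hδ₁'⟩ := hFapprox p.1 p.2 (by simpa using hp) ε' hε'
    obtain ⟨δ₂, hδ₂, hδ₂'⟩ := hFapprox p'.1 p'.2 (by simpa using hp') ε' hε'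
    obtain ⟨q, hqD, hqd⟩ := Metric.mem_closure_iff.mp hp (min δ₁ ε') (lt_min hδ₁ hε')
    obtain ⟨q', hq'D, hq'd⟩ := Metric.mem_closure_iff.mp hp' (min δ₂ ε') (lt_min hδ₂ hε')
    have hq1 : ‖F₀ q.1 q.2 - F p.1 p.2‖ ≤ ε' :=
      hδ₁' q hqD (lt_of_lt_of_le (by simpa using hqd) (min_le_left _ _))
    have hq2 : ‖F₀ q'.1 q'.2 - F p'.1 p'.2‖ ≤ ε' :=
      hδ₂' q' hq'D (lt_of_lt_of_le (by simpa using hq'd) (min_le_left _ _))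
    have hqp : dist p q < ε' := lt_of_lt_of_le hqd (min_le_right _ _)
    have hq'p : dist p' q' < ε' := lt_of_lt_of_le hq'd (min_le_right _ _)
    have hmid : ‖F₀ q.1 q.2 - F₀ q'.1 q'.2‖
        ≤ L * Real.sqrt (‖q.1 - q'.1‖ ^ 2 + ‖q.2 - q'.2‖ ^ 2) :=
      hF0lip _ hqD.1 _ hq'D.1 _ hqD.2 _ hq'D.2
    have hsq : Real.sqrt (‖q.1 - q'.1‖ ^ 2 + ‖q.2 - q'.2‖ ^ 2)
        ≤ Real.sqrt (‖p.1 - p'.1‖ ^ 2 + ‖p.2 - p'.2‖ ^ 2) + 2 * ε' + 2 * ε' := by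
      have hstep := sqrt_norm_perturb (q.1 - q'.1) (p.1 - p'.1) (q.2 - q'.2) (p.2 - p'.2)
      have hc1 : ‖q.1 - q'.1 - (p.1 - p'.1)‖ ≤ 2 * ε' := by
        calc ‖q.1 - q'.1 - (p.1 - p'.1)‖ = ‖(q.1 - p.1) + (p'.1 - q'.1)‖ := by
              congr 1; abel
          _ ≤ ‖q.1 - p.1‖ + ‖p'.1 - q'.1‖ := norm_add_le _ _
          _ ≤ dist q p + dist p' q' := by
              gcongr <;> rw [← dist_eq_norm, Prod.dist_eq]
              · exact le_max_left _ _
              · exact le_max_left _ _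
          _ ≤ 2 * ε' := by
              rw [dist_comm q p]
              linarith
      have hc2 : ‖q.2 - q'.2 - (p.2 - p'.2)‖ ≤ 2 * ε' := by
        calc ‖q.2 - q'.2 - (p.2 - p'.2)‖ = ‖(q.2 - p.2) + (p'.2 - q'.2)‖ := by
              congr 1; abel
          _ ≤ ‖q.2 - p.2‖ + ‖p'.2 - q'.2‖ := norm_add_le _ _
          _ ≤ dist q p + dist p' q' := by
              gcongr <;> rw [← dist_eq_norm, Prod.dist_eq]
              · exact le_max_right _ _
              · exact le_max_right _ _
          _ ≤ 2 * ε' := by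
              rw [dist_comm q p]
              linarith
      linarith
    have htri : ‖F p.1 p.2 - F p'.1 p'.2‖
        ≤ ‖F₀ q.1 q.2 - F p.1 p.2‖ + ‖F₀ q.1 q.2 - F₀ q'.1 q'.2‖
          + ‖F₀ q'.1 q'.2 - F p'.1 p'.2‖ := by
      have h1 : F p.1 p.2 - F p'.1 p'.2
          = -(F₀ q.1 q.2 - F p.1 p.2) + (F₀ q.1 q.2 - F₀ q'.1 q'.2)
            + (F₀ q'.1 q'.2 - F p'.1 p'.2) := by abel
      rw [h1]
      calc _ ≤ ‖-(F₀ q.1 q.2 - F p.1 p.2) + (F₀ q.1 q.2 - F₀ q'.1 q'.2)‖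
            + ‖F₀ q'.1 q'.2 - F p'.1 p'.2‖ := norm_add_le _ _
        _ ≤ _ := by
            have := norm_add_le (-(F₀ q.1 q.2 - F p.1 p.2)) (F₀ q.1 q.2 - F₀ q'.1 q'.2)
            rw [norm_neg] at this
            linarith
    have hsqnn : (0:ℝ) ≤ Real.sqrt (‖p.1 - p'.1‖ ^ 2 + ‖p.2 - p'.2‖ ^ 2) := Real.sqrt_nonneg _
    have hfinal : L * Real.sqrt (‖q.1 - q'.1‖ ^ 2 + ‖q.2 - q'.2‖ ^ 2)
        ≤ L * Real.sqrt (‖p.1 - p'.1‖ ^ 2 + ‖p.2 - p'.2‖ ^ 2) + 4 * L * ε' := by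
      have := mul_le_mul_of_nonneg_left hsq hL
      nlinarith
    have hcoef : 2 * ε' + 4 * L * ε' ≤ ε := by
      have hc : (4 * L + 3) * ε' = ε := by
        rw [hε'def]
        field_simp
      nlinarith [hε'.le]
    linarith
  -- the main uniform convergence fact
  have main : ∀ ε : ℝ, 0 < ε → {ℓ : ℕ | ∀ x : Fin (2 ^ ℓ) → X, ∀ u ∈ U,
      ‖empEmbed Φ (f (2 ^ ℓ) x u) - F (empEmbed Φ x) u‖ ≤ ε} ∈ 𝒰 := by
    intro ε hε
    set r : ℝ := ε / (24 * (L + 1)) with hrdef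
    have hr : 0 < r := by positivity
    have hKcpt : IsCompact (S ×ˢ U) := hScpt.prod hUcpt
    obtain ⟨t, htK, htcover⟩ := hKcpt.elim_nhds_subcover (fun p => Metric.ball p r)
      (fun p _ => Metric.ball_mem_nhds p hr)
    have hnet : ∀ p ∈ t, ∃ q, q ∈ D ∧ dist p q < r := by
      intro p hp
      obtain ⟨q, hq1, hq2⟩ := Metric.mem_closure_iff.mp (hSUclD (htK p hp)) r hr
      exact ⟨q, hq1, hq2⟩
    choose! q hqD hqd using hnet
    have hrepq : ∀ p ∈ t, ∃ j : ℕ, ∃ x : Fin (2 ^ j) → X, empEmbed Φ x = (q p).1 := by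
      intro p hp
      exact Set.mem_iUnion.mp ((hqD p hp).1)
    choose! j xj hxj using hrepq
    have hB : (⋂ p ∈ t, {ℓ : ℕ | j p ≤ ℓ ∧
        ‖T (q p).1 (q p).2 ℓ - F₀ (q p).1 (q p).2‖ < ε / 3}) ∈ 𝒰 := by
      refine (Filter.biInter_finset_mem t).mpr (fun p hp => ?_)
      have h1 : ∀ᶠ ℓ in (𝒰 : Filter ℕ), j p ≤ ℓ := h𝒰 (Filter.eventually_ge_atTop (j p))
      have h2 : ∀ᶠ ℓ in (𝒰 : Filter ℕ),
          ‖T (q p).1 (q p).2 ℓ - F₀ (q p).1 (q p).2‖ < ε / 3 := by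
        have htend : Filter.Tendsto
            (fun ℓ => ‖T (q p).1 (q p).2 ℓ - F₀ (q p).1 (q p).2‖) 𝒰 (nhds 0) := by
          have := ((hF0lim (q p).1 (q p).2).sub
            (tendsto_const_nhds (x := F₀ (q p).1 (q p).2) (f := (𝒰 : Filter ℕ)))).norm
          simpa using this
        exact htend.eventually_lt_const (by positivity)
      exact h1.and h2
    refine Filter.mem_of_superset hB ?_
    intro ℓ hℓ
    simp only [Set.mem_setOf_eq]
    intro x u hu
    have hzK : (empEmbed Φ x, u) ∈ S ×ˢ U :=
      ⟨empEmbed_mem_kmeImage hΦmeas hC Nat.one_le_two_pow x, hu⟩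
    obtain ⟨p, hp, hball⟩ := Set.mem_iUnion₂.mp (htcover hzK)
    have hzp : dist (empEmbed Φ x, u) p < r := Metric.mem_ball.mp hball
    have hzq : dist (empEmbed Φ x, u) (q p) < 2 * r := by
      calc dist (empEmbed Φ x, u) (q p) ≤ dist (empEmbed Φ x, u) p + dist p (q p) :=
            dist_triangle _ _ _
        _ < 2 * r := by have := hqd p hp; linarith
    obtain ⟨hjp, hTF⟩ := Set.mem_iInter₂.mp hℓ p hp
    have hex2 : ∃ xx : Fin (2 ^ ℓ) → X, empEmbed Φ xx = (q p).1 := by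
      obtain ⟨x', hx'⟩ := exists_tuple_pow (Φ := Φ) hjp (xj p hp)
      exact ⟨x', by rw [hx', hxj p hp]⟩
    obtain ⟨wt, hwt, hTwt⟩ := hTpos (q p).1 (q p).2 ℓ hex2
    have hu2 : (q p).2 ∈ U := (hqD p hp).2
    have hcomp1 : ‖empEmbed Φ x - (q p).1‖ ≤ 2 * r := by
      have : ‖empEmbed Φ x - (q p).1‖ ≤ dist (empEmbed Φ x, u) (q p) := by
        rw [← dist_eq_norm, Prod.dist_eq]; exact le_max_left _ _
      linarith
    have hcomp2 : ‖u - (q p).2‖ ≤ 2 * r := by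
      have : ‖u - (q p).2‖ ≤ dist (empEmbed Φ x, u) (q p) := by
        rw [← dist_eq_norm, Prod.dist_eq]; exact le_max_right _ _
      linarith
    have hb1 : ‖empEmbed Φ (f (2 ^ ℓ) x u) - T (q p).1 (q p).2 ℓ‖ ≤ 4 * L * r := by
      rw [hTwt]
      calc ‖empEmbed Φ (f (2 ^ ℓ) x u) - empEmbed Φ (f (2 ^ ℓ) wt (q p).2)‖
          ≤ L * Real.sqrt (‖empEmbed Φ x - empEmbed Φ wt‖ ^ 2 + ‖u - (q p).2‖ ^ 2) :=
            hlip (2 ^ ℓ) Nat.one_le_two_pow x wt u hu (q p).2 hu2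
        _ ≤ L * (‖empEmbed Φ x - empEmbed Φ wt‖ + ‖u - (q p).2‖) :=
            mul_le_mul_of_nonneg_left (norm_sqrt_lemma _ _ _ _) hL
        _ ≤ L * (2 * r + 2 * r) := by
            apply mul_le_mul_of_nonneg_left _ hL
            rw [hwt]
            linarith
        _ = 4 * L * r := by ring
    have hb3 : ‖F (q p).1 (q p).2 - F (empEmbed Φ x) u‖ ≤ 4 * L * r := by
      have hqcl : ((q p).1, (q p).2) ∈ closure D := subset_closure (by simpa using hqD p hp)
      have hzcl : ((empEmbed Φ x, u) : H₀ × H) ∈ closure D := hSUclD hzK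
      calc ‖F (q p).1 (q p).2 - F (empEmbed Φ x) u‖
          ≤ L * Real.sqrt (‖(q p).1 - empEmbed Φ x‖ ^ 2 + ‖(q p).2 - u‖ ^ 2) :=
            hFlip ((q p).1, (q p).2) hqcl (empEmbed Φ x, u) hzcl
        _ ≤ L * (‖(q p).1 - empEmbed Φ x‖ + ‖(q p).2 - u‖) :=
            mul_le_mul_of_nonneg_left (norm_sqrt_lemma _ _ _ _) hL
        _ ≤ L * (2 * r + 2 * r) := by
            apply mul_le_mul_of_nonneg_left _ hL
            rw [norm_sub_rev ((q p).1), norm_sub_rev ((q p).2)]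
            linarith
        _ = 4 * L * r := by ring
    have hFq : F (q p).1 (q p).2 = F₀ (q p).1 (q p).2 := hFeq (q p) (hqD p hp)
    have htri : ‖empEmbed Φ (f (2 ^ ℓ) x u) - F (empEmbed Φ x) u‖
        ≤ ‖empEmbed Φ (f (2 ^ ℓ) x u) - T (q p).1 (q p).2 ℓ‖
          + ‖T (q p).1 (q p).2 ℓ - F₀ (q p).1 (q p).2‖
          + ‖F (q p).1 (q p).2 - F (empEmbed Φ x) u‖ := by
      rw [hFq]
      have h1 : empEmbed Φ (f (2 ^ ℓ) x u) - F (empEmbed Φ x) u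
          = (empEmbed Φ (f (2 ^ ℓ) x u) - T (q p).1 (q p).2 ℓ)
            + (T (q p).1 (q p).2 ℓ - F₀ (q p).1 (q p).2)
            + (F₀ (q p).1 (q p).2 - F (empEmbed Φ x) u) := by abel
      rw [h1]
      calc _ ≤ ‖(empEmbed Φ (f (2 ^ ℓ) x u) - T (q p).1 (q p).2 ℓ)
            + (T (q p).1 (q p).2 ℓ - F₀ (q p).1 (q p).2)‖
            + ‖F₀ (q p).1 (q p).2 - F (empEmbed Φ x) u‖ := norm_add_le _ _
        _ ≤ _ := by
            have := norm_add_le (empEmbed Φ (f (2 ^ ℓ) x u) - T (q p).1 (q p).2 ℓ)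
              (T (q p).1 (q p).2 ℓ - F₀ (q p).1 (q p).2)
            linarith
    have hrbound : 8 * L * r ≤ ε / 3 := by
      have hc : (24 * (L + 1)) * r = ε := by
        rw [hrdef]
        field_simp
      nlinarith [hr.le]
    calc ‖empEmbed Φ (f (2 ^ ℓ) x u) - F (empEmbed Φ x) u‖
        ≤ 4 * L * r + ε / 3 + 4 * L * r := by
          have := le_of_lt hTF
          linarith
      _ ≤ ε := by linarith
  -- construct the subsequence
  have hCmem : ∀ k : ℕ, (⋂ j ∈ Finset.range (k + 1),
      {ℓ : ℕ | ∀ x : Fin (2 ^ ℓ) → X, ∀ u ∈ U,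
        ‖empEmbed Φ (f (2 ^ ℓ) x u) - F (empEmbed Φ x) u‖ ≤ 1 / (j + 1)}) ∈ 𝒰 := by
    intro k
    refine (Filter.biInter_finset_mem _).mpr (fun j _ => main _ ?_)
    positivity
  set Cset : ℕ → Set ℕ := fun k => ⋂ j ∈ Finset.range (k + 1),
      {ℓ : ℕ | ∀ x : Fin (2 ^ ℓ) → X, ∀ u ∈ U,
        ‖empEmbed Φ (f (2 ^ ℓ) x u) - F (empEmbed Φ x) u‖ ≤ 1 / (j + 1)} with hCsetdef
  have hCinf : ∀ k, (Cset k).Infinite := fun k => hinf𝒰 _ (hCmem k)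
  set ψ : ℕ → ℕ := fun n => Nat.rec ((hCinf 0).nonempty.choose)
    (fun k ih => ((hCinf (k + 1)).exists_gt ih).choose) n with hψdef
  have hψmem : ∀ n, ψ n ∈ Cset n := by
    intro n
    cases n with
    | zero => exact (hCinf 0).nonempty.choose_spec
    | succ k => exact ((hCinf (k + 1)).exists_gt _).choose_spec.1
  have hψlt : ∀ n, ψ n < ψ (n + 1) :=
    fun n => ((hCinf (n + 1)).exists_gt _).choose_spec.2
  have hψmono : StrictMono ψ := strictMono_nat_of_lt_succ hψlt
  refine ⟨fun k => 2 ^ ψ k, fun a b h => Nat.pow_lt_pow_right Nat.one_lt_two (hψmono h),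
    fun k => Nat.one_le_two_pow, F, ?_, ?_, ?_, ?_⟩
  · -- F maps S × U into S
    intro s hs u hu
    exact hFS s u (hSUclD (Set.mk_mem_prod hs hu))
  · -- Lipschitz
    intro s hs s' hs' u hu u' hu'
    exact hFlip (s, u) (hSUclD (Set.mk_mem_prod hs hu)) (s', u')
      (hSUclD (Set.mk_mem_prod hs' hu'))
  · -- uniform convergence along the subsequence
    intro ε hε
    obtain ⟨k, hk⟩ := exists_nat_one_div_lt hε
    refine ⟨k, fun ℓ hℓ x u hu => ?_⟩
    have hm := hψmem ℓ
    have hmk := Set.mem_iInter₂.mp hm k (Finset.mem_range.mpr (by omega))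
    exact le_trans (hmk x u hu) (le_of_lt hk)
  · -- mean-field dynamics on measures
    set fbar : Measure X → H → Measure X := fun μ u =>
      if h : ∃ ν : Measure X, IsProbabilityMeasure ν ∧ F (∫ y, Φ y ∂μ) u = ∫ y, Φ y ∂ν
      then h.choose else Measure.dirac x₀ with hfbardef
    have hfbar1 : ∀ μ : Measure X, IsProbabilityMeasure μ → ∀ u ∈ U,
        IsProbabilityMeasure (fbar μ u) ∧ (∫ y, Φ y ∂(fbar μ u)) = F (∫ y, Φ y ∂μ) u := by
      intro μ hμ u hu
      have hsS : (∫ y, Φ y ∂μ) ∈ S := ⟨μ, hμ, rfl⟩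
      have hex : ∃ ν : Measure X, IsProbabilityMeasure ν ∧ F (∫ y, Φ y ∂μ) u = ∫ y, Φ y ∂ν :=
        hFS _ u (hSUclD (Set.mk_mem_prod hsS hu))
      rw [hfbardef]
      dsimp only
      rw [dif_pos hex]
      exact ⟨hex.choose_spec.1, hex.choose_spec.2.symm⟩
    refine ⟨fbar, hfbar1, ?_⟩
    intro ε hε
    obtain ⟨k, hk⟩ := exists_nat_one_div_lt hε
    refine ⟨k, fun ℓ hℓ x u hu => ?_⟩
    have hprob : IsProbabilityMeasure (empMeasure x) := empMeasure_isProb Nat.one_le_two_pow x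
    rw [integral_empMeasure hΦmeas hC, (hfbar1 (empMeasure x) hprob u hu).2,
      integral_empMeasure hΦmeas hC]
    have hm := hψmem ℓ
    have hmk := Set.mem_iInter₂.mp hm k (Finset.mem_range.mpr (by omega))
    exact le_trans (hmk x u hu) (le_of_lt hk)
end

section
/- Let X be a set, H₀ and H real Hilbert spaces, Φ : X → H₀ a bounded map, U ⊆ H, and for each M ≥ 1 let f_M : X^M × U → X^M and ℓ_M : X^M × U → ℝ. Let S' ⊆ H₀ contain all empirical embeddings Π̂(x) for all M and x ∈ X^M, let F : S' × U → S' satisfy ‖F(s,u) − F(s',u)‖ ≤ L_f‖s − s'‖ for all s,s' ∈ S', u ∈ U, and let Λ : S' × U → ℝ satisfy |Λ(s,u) − Λ(s',u)| ≤ L_ℓ‖s − s'‖ for all s,s' ∈ S', u ∈ U. Assume lim_{M→∞} sup_{x ∈ X^M, u ∈ U} ‖Π̂(f_M(x,u)) − F(Π̂(x),u)‖ = 0 and lim_{M→∞} sup_{x ∈ X^M, u ∈ U} |ℓ_M(x,u) − Λ(Π̂(x),u)| = 0. For x₀ ∈ X^M and u(0),…,u(N−1) ∈ U define x(0)=x₀,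 x(n+1)=f_M(x(n),u(n)), ν(0)=Π̂(x₀), ν(n+1)=F(ν(n),u(n)), and set J_N^{[M]}(x₀,u) = ∑_{n=0}^{N−1} ℓ_M(x(n),u(n)) and J_N(Π̂(x₀),u) = ∑_{n=0}^{N−1} Λ(ν(n),u(n)). Then for every N ≥ 1, lim_{M→∞} sup_{x₀ ∈ X^M, u ∈ U^N} |J_N^{[M]}(x₀,u) − J_N(Π̂(x₀),u)| = 0. -/
open Finset

/-!
The empirical embeddings `Π̂(x(n))` of the microscopic trajectory form an approximate orbit of
the mean field dynamics: each step commits an error of at most `δ` (uniform convergence of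
`f_M`), which the `L_f`-Lipschitz map `F` then propagates. By a discrete Grönwall argument,
`‖Π̂(x(n)) − ν(n)‖ ≤ δ ∑_{k<n} L_fᵏ`, and together with the uniform convergence of `ℓ_M` and the
Lipschitz continuity of `Λ` each stage cost differs by at most `δ (1 + L_ℓ ∑_{k<N} L_fᵏ)`.
Summing over the `N` stages and choosing `δ` accordingly gives the claim.
-/

theorem le_mul_geom_sum_of_le_add_mul {e : ℕ → ℝ} {δ L : ℝ} {N : ℕ} (hL : 0 ≤ L)
    (h0 : e 0 ≤ 0) (hstep : ∀ n < N, e (n + 1) ≤ δ + L * e n) :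
    ∀ n ≤ N, e n ≤ δ * ∑ k ∈ range n, L ^ k := by
  intro n hn
  induction n with
  | zero => simpa using h0
  | succ n ih =>
    calc e (n + 1) ≤ δ + L * e n := hstep n hn
      _ ≤ δ + L * (δ * ∑ k ∈ range n, L ^ k) := by gcongr; exact ih (by omega)
      _ = δ * ∑ k ∈ range (n + 1), L ^ k := by rw [geom_sum_succ]; ring

section Orbit

variable {E : Type*} {G : ℕ → E → E} {S : Set E} {N : ℕ} {a b : ℕ → E}

theorem orbit_mem_of_mapsTo (hG : ∀ n < N, Set.MapsTo (G n) S S) (h0 : b 0 ∈ S)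
    (hb : ∀ n < N, b (n + 1) = G n (b n)) : ∀ n ≤ N, b n ∈ S := by
  intro n hn
  induction n with
  | zero => exact h0
  | succ n ih => rw [hb n hn]; exact hG n hn (ih (by omega))

theorem dist_approx_orbit_le [PseudoMetricSpace E] {L δ : ℝ} (hL : 0 ≤ L)
    (hG : ∀ n < N, ∀ s ∈ S, ∀ s' ∈ S, dist (G n s) (G n s') ≤ L * dist s s')
    (haS : ∀ n < N, a n ∈ S) (hbS : ∀ n < N, b n ∈ S) (h0 : a 0 = b 0)
    (ha : ∀ n < N, dist (a (n + 1)) (G n (a n)) ≤ δ) (hb : ∀ n < N, b (n + 1) = G n (b n)) :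
    ∀ n ≤ N, dist (a n) (b n) ≤ δ * ∑ k ∈ range n, L ^ k := by
  refine le_mul_geom_sum_of_le_add_mul hL (by simp [h0]) fun n hn => ?_
  calc dist (a (n + 1)) (b (n + 1))
      ≤ dist (a (n + 1)) (G n (a n)) + dist (G n (a n)) (G n (b n)) := by
        rw [hb n hn]; exact dist_triangle _ _ _
    _ ≤ δ + L * dist (a n) (b n) := add_le_add (ha n hn) (hG n hn _ (haS n hn) _ (hbS n hn))

theorem abs_sum_cost_approx_orbit_le [PseudoMetricSpace E] {C : ℕ → E → ℝ} {c : ℕ → ℝ}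
    {L K δ : ℝ} (hL : 0 ≤ L) (hK : 0 ≤ K)
    (hG : ∀ n < N, ∀ s ∈ S, ∀ s' ∈ S, dist (G n s) (G n s') ≤ L * dist s s')
    (hC : ∀ n < N, ∀ s ∈ S, ∀ s' ∈ S, |C n s - C n s'| ≤ K * dist s s')
    (haS : ∀ n < N, a n ∈ S) (hbS : ∀ n < N, b n ∈ S) (h0 : a 0 = b 0)
    (ha : ∀ n < N, dist (a (n + 1)) (G n (a n)) ≤ δ) (hb : ∀ n < N, b (n + 1) = G n (b n))
    (hc : ∀ n < N, |c n - C n (a n)| ≤ δ) :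
    |∑ n ∈ range N, c n - ∑ n ∈ range N, C n (b n)|
      ≤ N * (δ * (1 + K * ∑ k ∈ range N, L ^ k)) := by
  have hdist := dist_approx_orbit_le hL hG haS hbS h0 ha hb
  have hstage (n : ℕ) (hn : n ∈ range N) :
      |c n - C n (b n)| ≤ δ * (1 + K * ∑ k ∈ range N, L ^ k) := by
    rw [mem_range] at hn
    have hδ : 0 ≤ δ := (abs_nonneg _).trans (hc n hn)
    have hgeom : ∑ k ∈ range n, L ^ k ≤ ∑ k ∈ range N, L ^ k :=
      sum_le_sum_of_subset_of_nonneg (range_subset_range.2 hn.le) fun k _ _ => pow_nonneg hL k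
    calc |c n - C n (b n)| ≤ |c n - C n (a n)| + |C n (a n) - C n (b n)| := abs_sub_le _ _ _
      _ ≤ δ + K * (δ * ∑ k ∈ range N, L ^ k) := by
        grw [hc n hn, hC n hn _ (haS n hn) _ (hbS n hn), hdist n hn.le, hgeom]
      _ = δ * (1 + K * ∑ k ∈ range N, L ^ k) := by ring
  rw [← sum_sub_distrib, ← card_range N]
  exact (abs_sum_le_sum_abs _ _).trans (by simpa using sum_le_sum hstage)

end Orbit

theorem mfl_total_cost_general
    {X : Type*}
    {H₀ : Type*} [NormedAddCommGroup H₀] [InnerProductSpace ℝ H₀]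
    {H : Type*}
    (Φ : X → H₀)
    (U : Set H)
    (f : (M : ℕ) → (Fin M → X) → H → (Fin M → X))
    (ℓ : (M : ℕ) → (Fin M → X) → H → ℝ)
    (S' : Set H₀) (hS' : ∀ M : ℕ, 1 ≤ M → ∀ x : Fin M → X, empEmbed Φ x ∈ S')
    (F : H₀ → H → H₀) (hFS : ∀ s ∈ S', ∀ u ∈ U, F s u ∈ S')
    (Λ : H₀ → H → ℝ)
    (Lf : ℝ) (hLf : 0 ≤ Lf)
    (hFlip : ∀ s ∈ S', ∀ s' ∈ S', ∀ u ∈ U, ‖F s u - F s' u‖ ≤ Lf * ‖s - s'‖)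
    (Lℓ : ℝ) (hLℓ : 0 ≤ Lℓ)
    (hΛlip : ∀ s ∈ S', ∀ s' ∈ S', ∀ u ∈ U, |Λ s u - Λ s' u| ≤ Lℓ * ‖s - s'‖)
    -- uniform convergence of the embedded transition maps
    (hconvF : ∀ ε : ℝ, 0 < ε → ∃ M₀ : ℕ, ∀ M : ℕ, M₀ ≤ M → 1 ≤ M →
      ∀ x : Fin M → X, ∀ u ∈ U, ‖empEmbed Φ (f M x u) - F (empEmbed Φ x) u‖ ≤ ε)
    -- uniform convergence of the stage costs
    (hconvℓ : ∀ ε : ℝ, 0 < ε → ∃ M₀ : ℕ, ∀ M : ℕ, M₀ ≤ M → 1 ≤ M →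
      ∀ x : Fin M → X, ∀ u ∈ U, |ℓ M x u - Λ (empEmbed Φ x) u| ≤ ε) :
    ∀ N : ℕ, 1 ≤ N → ∀ ε : ℝ, 0 < ε → ∃ M₀ : ℕ, ∀ M : ℕ, M₀ ≤ M → 1 ≤ M →
      ∀ (u : ℕ → H), (∀ n < N, u n ∈ U) →
      ∀ (x : ℕ → Fin M → X), (∀ n < N, x (n + 1) = f M (x n) (u n)) →
      ∀ (ν : ℕ → H₀), ν 0 = empEmbed Φ (x 0) → (∀ n < N, ν (n + 1) = F (ν n) (u n)) →
        |(∑ n ∈ Finset.range N, ℓ M (x n) (u n)) -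
          (∑ n ∈ Finset.range N, Λ (ν n) (u n))| ≤ ε := by
  intro N hN ε hε
  set S := ∑ k ∈ range N, Lf ^ k
  have hS : 0 ≤ S := sum_nonneg fun k _ => pow_nonneg hLf k
  set δ := ε / (N * (1 + Lℓ * S))
  have hδ : 0 < δ := by positivity
  obtain ⟨M₁, hM₁⟩ := hconvF δ hδ
  obtain ⟨M₂, hM₂⟩ := hconvℓ δ hδ
  refine ⟨max M₁ M₂, fun M hM hM1 u hu x hx ν hν0 hν => ?_⟩
  have hνS : ∀ n ≤ N, ν n ∈ S' :=
    orbit_mem_of_mapsTo (fun n hn s hs => hFS s hs _ (hu n hn)) (hν0 ▸ hS' M hM1 _) hν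
  calc _ ≤ N * (δ * (1 + Lℓ * S)) :=
        abs_sum_cost_approx_orbit_le (G := fun n s => F s (u n)) (C := fun n s => Λ s (u n))
          hLf hLℓ
          (fun n hn s hs s' hs' => by simpa only [dist_eq_norm] using hFlip s hs s' hs' _ (hu n hn))
          (fun n hn s hs s' hs' => by simpa only [dist_eq_norm] using hΛlip s hs s' hs' _ (hu n hn))
          (fun n _ => hS' M hM1 _) (fun n hn => hνS n hn.le) hν0.symm
          (fun n hn => by
            rw [dist_eq_norm, hx n hn]
            exact hM₁ M (le_of_max_le_left hM) hM1 _ _ (hu n hn))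
          hν (fun n hn => hM₂ M (le_of_max_le_right hM) hM1 _ _ (hu n hn))
    _ = ε := by
      have : (0 : ℝ) < N := by exact_mod_cast hN
      simp only [δ]; field_simp

/-- Mean field limit of the total cost functional: if the transition maps `f_M` and stage
costs `ℓ_M` converge uniformly (over states and inputs) to the embedded mean field
transition map `F` and stage cost `Λ`, both Lipschitz in the state on a set `S'`
containing all empirical embeddings, then for every horizon `N ≥ 1` the total costs
`J_N^{[M]}(x₀,u) = ∑_{n<N} ℓ_M(x(n),u(n))` converge uniformly to
`J_N(Π̂(x₀),u) = ∑_{n<N} Λ(ν(n),u(n))`, where `x(n+1) = f_M(x(n),u(n))`,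
`ν(0) = Π̂(x₀)` and `ν(n+1) = F(ν(n),u(n))`. -/
theorem mfl_total_cost
    {X : Type*}
    {H₀ : Type*} [NormedAddCommGroup H₀] [InnerProductSpace ℝ H₀] [CompleteSpace H₀]
    {H : Type*} [NormedAddCommGroup H] [InnerProductSpace ℝ H] [CompleteSpace H]
    (Φ : X → H₀) (hΦbdd : ∃ C : ℝ, ∀ x : X, ‖Φ x‖ ≤ C)
    (U : Set H)
    (f : (M : ℕ) → (Fin M → X) → H → (Fin M → X))
    (ℓ : (M : ℕ) → (Fin M → X) → H → ℝ)
    (S' : Set H₀) (hS' : ∀ M : ℕ, 1 ≤ M → ∀ x : Fin M → X, empEmbed Φ x ∈ S')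
    (F : H₀ → H → H₀) (hFS : ∀ s ∈ S', ∀ u ∈ U, F s u ∈ S')
    (Λ : H₀ → H → ℝ)
    (Lf : ℝ) (hLf : 0 ≤ Lf)
    (hFlip : ∀ s ∈ S', ∀ s' ∈ S', ∀ u ∈ U, ‖F s u - F s' u‖ ≤ Lf * ‖s - s'‖)
    (Lℓ : ℝ) (hLℓ : 0 ≤ Lℓ)
    (hΛlip : ∀ s ∈ S', ∀ s' ∈ S', ∀ u ∈ U, |Λ s u - Λ s' u| ≤ Lℓ * ‖s - s'‖)
    -- uniform convergence of the embedded transition maps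
    (hconvF : ∀ ε : ℝ, 0 < ε → ∃ M₀ : ℕ, ∀ M : ℕ, M₀ ≤ M → 1 ≤ M →
      ∀ x : Fin M → X, ∀ u ∈ U, ‖empEmbed Φ (f M x u) - F (empEmbed Φ x) u‖ ≤ ε)
    -- uniform convergence of the stage costs
    (hconvℓ : ∀ ε : ℝ, 0 < ε → ∃ M₀ : ℕ, ∀ M : ℕ, M₀ ≤ M → 1 ≤ M →
      ∀ x : Fin M → X, ∀ u ∈ U, |ℓ M x u - Λ (empEmbed Φ x) u| ≤ ε) :
    ∀ N : ℕ, 1 ≤ N → ∀ ε : ℝ, 0 < ε → ∃ M₀ : ℕ, ∀ M : ℕ, M₀ ≤ M → 1 ≤ M →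
      ∀ (u : ℕ → H), (∀ n < N, u n ∈ U) →
      ∀ (x : ℕ → Fin M → X), (∀ n < N, x (n + 1) = f M (x n) (u n)) →
      ∀ (ν : ℕ → H₀), ν 0 = empEmbed Φ (x 0) → (∀ n < N, ν (n + 1) = F (ν n) (u n)) →
        |(∑ n ∈ Finset.range N, ℓ M (x n) (u n)) -
          (∑ n ∈ Finset.range N, Λ (ν n) (u n))| ≤ ε :=
  mfl_total_cost_general Φ U f ℓ S' hS' F hFS Λ Lf hLf hFlip Lℓ hLℓ hΛlip hconvF hconvℓ
end

section
/- Let X be a set, H₀ and H real Hilbert spaces, Φ : X → H₀ a bounded map, U ⊆ H, M ≥ 1, f_M : X^M × U → X^M, κ_M : X^M → U, and let S' ⊆ H₀ contain all empirical embeddings and all kernel mean embeddings Π(μ). Suppose F : S' × U → S' satisfies ‖F(s,u) − F(s',u')‖ ≤ L_f(‖s−s'‖² + ‖u−u'‖²)^{1/2}, K : S' → U satisfies ‖K(s) − K(s')‖ ≤ L_κ‖s − s'‖, and let ε_κ ≥ sup_{x ∈ X^M} ‖κ_M(x) − K(Π̂(x))‖ and ε_f ≥ sup_{x ∈ X^M,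 u ∈ U} ‖Π̂(f_M(x,u)) − F(Π̂(x),u)‖. Then for every x ∈ X^M and every Borel probability measure μ on X: ‖Π̂(f_M(x, κ_M(x))) − F(Π(μ), K(Π(μ)))‖ ≤ L_f(1 + L_κ)·‖Π̂(x) − Π(μ)‖ + L_f·ε_κ + ε_f. -/
open MeasureTheory

/-- One-step closed-loop comparison: comparing one step of the microscopic closed loop
`x ↦ f_M(x, κ_M(x))` with one step of the mean field closed loop `s ↦ F(s, K(s))`, where
`F` is `L_f`-Lipschitz w.r.t. the Hilbert product norm, `K` is `L_κ`-Lipschitz,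
`ε_κ` bounds `sup_x ‖κ_M(x) - K(Π̂(x))‖` and `ε_f` bounds
`sup_{x,u} ‖Π̂(f_M(x,u)) - F(Π̂(x),u)‖`, one has for every `x ∈ X^M` and every Borel
probability measure `μ`:
`‖Π̂(f_M(x,κ_M(x))) - F(Π(μ), K(Π(μ)))‖ ≤ L_f(1+L_κ)‖Π̂(x) - Π(μ)‖ + L_f ε_κ + ε_f`. -/
theorem closed_loop_one_step_bound
    {X : Type*} [MeasurableSpace X]
    {H₀ : Type*} [NormedAddCommGroup H₀] [InnerProductSpace ℝ H₀] [CompleteSpace H₀]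
    {H : Type*} [NormedAddCommGroup H] [InnerProductSpace ℝ H] [CompleteSpace H]
    (Φ : X → H₀) (hΦmeas : StronglyMeasurable Φ) (hΦbdd : ∃ C : ℝ, ∀ x : X, ‖Φ x‖ ≤ C)
    (U : Set H) (M : ℕ) (hM : 1 ≤ M)
    (f : (Fin M → X) → H → (Fin M → X))
    (κ : (Fin M → X) → H) (hκU : ∀ x : Fin M → X, κ x ∈ U)
    (S' : Set H₀)
    -- S' contains all empirical embeddings
    (hS'emp : ∀ x : Fin M → X, empEmbed Φ x ∈ S')
    -- S' contains all kernel mean embeddings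
    (hS'kme : ∀ μ : Measure X, IsProbabilityMeasure μ → (∫ y, Φ y ∂μ) ∈ S')
    (F : H₀ → H → H₀)
    (K : H₀ → H) (hKU : ∀ s ∈ S', K s ∈ U)
    (Lf : ℝ) (hLf : 0 ≤ Lf)
    (hFlip : ∀ s ∈ S', ∀ s' ∈ S', ∀ u ∈ U, ∀ u' ∈ U,
      ‖F s u - F s' u'‖ ≤ Lf * Real.sqrt (‖s - s'‖ ^ 2 + ‖u - u'‖ ^ 2))
    (Lκ : ℝ) (hLκ : 0 ≤ Lκ)
    (hKlip : ∀ s ∈ S', ∀ s' ∈ S', ‖K s - K s'‖ ≤ Lκ * ‖s - s'‖)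
    (εκ : ℝ) (hεκ : ∀ x : Fin M → X, ‖κ x - K (empEmbed Φ x)‖ ≤ εκ)
    (εf : ℝ) (hεf : ∀ x : Fin M → X, ∀ u ∈ U, ‖empEmbed Φ (f x u) - F (empEmbed Φ x) u‖ ≤ εf) :
    ∀ x : Fin M → X, ∀ μ : Measure X, IsProbabilityMeasure μ →
      ‖empEmbed Φ (f x (κ x)) - F (∫ y, Φ y ∂μ) (K (∫ y, Φ y ∂μ))‖ ≤
        Lf * (1 + Lκ) * ‖empEmbed Φ x - ∫ y, Φ y ∂μ‖ + Lf * εκ + εf := by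
  intro x μ hμ
  set s := empEmbed Φ x
  set sμ := (∫ y, Φ y ∂μ)
  have hsS : s ∈ S' := hS'emp x
  have hsμS : sμ ∈ S' := hS'kme μ hμ
  set d := ‖s - sμ‖ with hd
  have hd0 : 0 ≤ d := norm_nonneg _
  have hu : ‖κ x - K sμ‖ ≤ εκ + Lκ * d := by
    calc ‖κ x - K sμ‖ ≤ ‖κ x - K s‖ + ‖K s - K sμ‖ := norm_sub_le_norm_sub_add_norm_sub _ _ _
    _ ≤ εκ + Lκ * d := add_le_add (hεκ x) (hKlip s hsS sμ hsμS)
  have hεκ0 : 0 ≤ εκ := le_trans (norm_nonneg _) (hεκ x)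
  have hb0 : 0 ≤ εκ + Lκ * d := add_nonneg hεκ0 (mul_nonneg hLκ hd0)
  have hsqrt : Real.sqrt (‖s - sμ‖ ^ 2 + ‖κ x - K sμ‖ ^ 2) ≤ d + (εκ + Lκ * d) := by
    have h1 : ‖s - sμ‖ ^ 2 + ‖κ x - K sμ‖ ^ 2 ≤ (d + (εκ + Lκ * d)) ^ 2 := by
      have h2 : ‖κ x - K sμ‖ ^ 2 ≤ (εκ + Lκ * d) ^ 2 :=
        pow_le_pow_left₀ (norm_nonneg _) hu 2
      nlinarith [norm_nonneg (κ x - K sμ), mul_nonneg hd0 hb0]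
    calc Real.sqrt (‖s - sμ‖ ^ 2 + ‖κ x - K sμ‖ ^ 2)
        ≤ Real.sqrt ((d + (εκ + Lκ * d)) ^ 2) := Real.sqrt_le_sqrt h1
      _ = d + (εκ + Lκ * d) := Real.sqrt_sq (add_nonneg hd0 hb0)
  have hF : ‖F s (κ x) - F sμ (K sμ)‖ ≤ Lf * (d + (εκ + Lκ * d)) := by
    calc ‖F s (κ x) - F sμ (K sμ)‖
        ≤ Lf * Real.sqrt (‖s - sμ‖ ^ 2 + ‖κ x - K sμ‖ ^ 2) :=
          hFlip s hsS sμ hsμS (κ x) (hκU x) (K sμ) (hKU sμ hsμS)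
      _ ≤ Lf * (d + (εκ + Lκ * d)) := by
          exact mul_le_mul_of_nonneg_left hsqrt hLf
  calc ‖empEmbed Φ (f x (κ x)) - F sμ (K sμ)‖
      ≤ ‖empEmbed Φ (f x (κ x)) - F s (κ x)‖ + ‖F s (κ x) - F sμ (K sμ)‖ :=
        norm_sub_le_norm_sub_add_norm_sub _ _ _
    _ ≤ εf + Lf * (d + (εκ + Lκ * d)) := add_le_add (hεf x (κ x) (hκU x)) hF
    _ = Lf * (1 + Lκ) * d + Lf * εκ + εf := by ring
end
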